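/- arXiv:1612.00093 — 3 statements merged into one kernel-verified Lean document; each statement's English description precedes it below -/
import Mathlib

section
/- Let f be a C² non-flat contracting Lorenz map without periodic attractors. If f has a wandering interval, then the union 𝒲 of all open wandering intervals of f is an open and dense subset of [0,1]. -/
open Set Filter Topology

noncomputable section

/-- The forward orbit of a point. -/
def posOrbit (f : ℝ → ℝ) (x : ℝ) : Set ℝ := {y | ∃ n : ℕ, f^[n] x = y}

/-- The pre-orbit of a point. -/
def preOrbit (f : ℝ → ℝ) (x : ℝ) : Set ℝ := {y | ∃ n : ℕ, f^[n] y = x}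

/-- The ω-limit set of a point. -/
def omegaLim (f : ℝ → ℝ) (x : ℝ) : Set ℝ :=
  {y | ∀ ε > 0, ∀ N : ℕ, ∃ n ≥ N, |f^[n] x - y| < ε}

/-- The α-limit set of a point: limits of sequences of preimages with times tending to ∞. -/
def alphaLim (f : ℝ → ℝ) (x : ℝ) : Set ℝ :=
  {y | ∀ ε > 0, ∀ N : ℕ, ∃ n ≥ N, ∃ z : ℝ, f^[n] z = x ∧ |z - y| < ε}

/-- The (full) basin of a set: points whose ω-limit is contained in it. -/
def omegaBasin (f : ℝ → ℝ) (A : Set ℝ) : Set ℝ := {x | omegaLim f x ⊆ A}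

/-- The basin of a set, relative to `[0,1]`. -/
def basin (f : ℝ → ℝ) (A : Set ℝ) : Set ℝ := {x | x ∈ Icc (0:ℝ) 1 ∧ omegaLim f x ⊆ A}

/-- Periodic point. -/
def IsPer (f : ℝ → ℝ) (p : ℝ) : Prop := ∃ n : ℕ, 1 ≤ n ∧ f^[n] p = p

/-- The domain of a Lorenz map with critical point `c`: `[0,1] \ {c}`. -/
def lorDom (c : ℝ) : Set ℝ := Icc (0:ℝ) 1 \ {c}

/-- The orbit of `x` never hits the critical point `c`. -/
def GoodOrbit (f : ℝ → ℝ) (c x : ℝ) : Prop := ∀ n : ℕ, f^[n] x ≠ c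

/-- A contracting Lorenz map on `[0,1]` with critical point `c`. -/
structure IsContractingLorenz (f : ℝ → ℝ) (c : ℝ) : Prop where
  c_mem : c ∈ Ioo (0:ℝ) 1
  map0 : f 0 = 0
  map1 : f 1 = 1
  maps : MapsTo f (lorDom c) (Icc 0 1)
  smooth : ContDiffOn ℝ 2 f (lorDom c)
  deriv_pos : ∀ x ∈ lorDom c, 0 < derivWithin f (lorDom c) x
  contracting : Tendsto (derivWithin f (lorDom c)) (𝓝[lorDom c] c) (𝓝 0)
  no_trivial_dynamics :
    ¬ ∃ (a b : ℝ) (n : ℕ), a < b ∧ 1 ≤ n ∧ ∀ x ∈ Ioo a b, f^[n] x = x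

/-- Non-flatness of a contracting Lorenz map at the critical point. -/
def IsNonFlat (f : ℝ → ℝ) (c : ℝ) : Prop :=
  ∃ (al be a b : ℝ) (φ₀ φ₁ : ℝ → ℝ),
    1 < al ∧ 1 < be ∧ a ∈ Icc (0:ℝ) 1 ∧ b ∈ Icc (0:ℝ) 1 ∧
    ContDiffOn ℝ 2 φ₀ (Icc 0 c) ∧ ContDiffOn ℝ 2 φ₁ (Icc c 1) ∧
    StrictMonoOn φ₀ (Icc 0 c) ∧ StrictMonoOn φ₁ (Icc c 1) ∧
    (∀ x ∈ Icc (0:ℝ) c, derivWithin φ₀ (Icc 0 c) x ≠ 0) ∧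
    (∀ x ∈ Icc c 1, derivWithin φ₁ (Icc c 1) x ≠ 0) ∧
    φ₀ '' Icc 0 c = Icc 0 (a ^ (1/al)) ∧
    φ₁ '' Icc c 1 = Icc 0 (b ^ (1/be)) ∧
    (∀ x ∈ Ico (0:ℝ) c, f x = a - φ₀ (c - x) ^ al) ∧
    (∀ x ∈ Ioc c 1, f x = 1 - b + φ₁ x ^ be)

/-- A periodic attractor: a finite set whose exact basin has nonempty interior. -/
def IsPeriodicAttractor (f : ℝ → ℝ) (Λ : Set ℝ) : Prop :=
  Λ.Finite ∧ Λ ⊆ Icc 0 1 ∧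
    (interior {x | x ∈ Icc (0:ℝ) 1 ∧ omegaLim f x = Λ}).Nonempty

def HasNoPeriodicAttractor (f : ℝ → ℝ) : Prop := ¬ ∃ Λ : Set ℝ, IsPeriodicAttractor f Λ

/-- An attracting periodic orbit. -/
def IsAttractingPeriodicOrbit (f : ℝ → ℝ) (p : ℝ) : Prop :=
  IsPer f p ∧ ∃ ε > 0,
    (Ioo p (p + ε) ⊆ omegaBasin f (posOrbit f p) ∨
     Ioo (p - ε) p ⊆ omegaBasin f (posOrbit f p))

/-- A wandering interval of a contracting Lorenz map with critical point `c`. -/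
def IsWanderingInterval (f : ℝ → ℝ) (c : ℝ) (I : Set ℝ) : Prop :=
  (∃ a b : ℝ, a < b ∧ I = Ioo a b) ∧ I ⊆ Icc 0 1 ∧
  (∀ (n : ℕ), ∀ x ∈ I, f^[n] x ≠ c) ∧
  (∀ i j : ℕ, 1 ≤ i → 1 ≤ j → i ≠ j → Disjoint (f^[i] '' I) (f^[j] '' I)) ∧
  (∀ p : ℝ, IsAttractingPeriodicOrbit f p → Disjoint I (omegaBasin f (posOrbit f p)))

/-- `(a,b)` is a renormalization interval of the Lorenz map `f` with critical point `c`. -/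
def IsRenormInterval (f : ℝ → ℝ) (c a b : ℝ) : Prop :=
  0 ≤ a ∧ a < c ∧ c < b ∧ b ≤ 1 ∧ IsPer f a ∧ IsPer f b ∧
  f^[Function.minimalPeriod f a] '' Ico a c ⊆ Icc a b ∧
  f^[Function.minimalPeriod f b] '' Ioc c b ⊆ Icc a b

/-- The complement (within `[0,1]`) of the set `Λ_J` of points never visiting `J = (a,b)`. -/
def gapSet (f : ℝ → ℝ) (a b : ℝ) : Set ℝ :=
  {x | x ∈ Icc (0:ℝ) 1 ∧ ∃ n : ℕ, f^[n] x ∈ Ioo a b}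

/-- The nice trapping region `K_J` associated to the renormalization interval `J = (a,b)`:
the union of the gaps of `Λ_J` containing an interval of the renormalization cycle. -/
def niceTrapping (f : ℝ → ℝ) (c a b : ℝ) : Set ℝ :=
  {x | x ∈ gapSet f a b ∧
    ((∃ i ≤ Function.minimalPeriod f a,
        f^[i] '' Ioo a c ⊆ connectedComponentIn (gapSet f a b) x) ∨
     (∃ i ≤ Function.minimalPeriod f b,
        f^[i] '' Ioo c b ⊆ connectedComponentIn (gapSet f a b) x))}

/-- `f` is ∞-renormalizable: it has infinitely many distinct renormalization intervals. -/
def InfinitelyRenormalizable (f : ℝ → ℝ) (c : ℝ) : Prop :=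
  {J : ℝ × ℝ | IsRenormInterval f c J.1 J.2}.Infinite

/-- `S` is residual in `U`: it contains the intersection with `U` of countably many
open sets, each dense in `U`. -/
def ResidualIn (S U : Set ℝ) : Prop :=
  ∃ g : ℕ → Set ℝ, (∀ n, IsOpen (g n) ∧ U ⊆ closure (g n)) ∧ U ∩ ⋂ n, g n ⊆ S

/-- `S` contains a relatively open and dense subset of `[0,1]`, namely `S ∩ [0,1]` itself
is relatively open and dense in `[0,1]`. -/
def OpenDenseIn01 (S : Set ℝ) : Prop :=
  (∃ U : Set ℝ, IsOpen U ∧ U ∩ Icc (0:ℝ) 1 = S ∩ Icc (0:ℝ) 1) ∧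
  Icc (0:ℝ) 1 ⊆ closure (S ∩ Icc (0:ℝ) 1)

/-- Milnor topological attractor (relative to `[0,1]`). -/
def IsTopologicalAttractor (f : ℝ → ℝ) (A : Set ℝ) : Prop :=
  IsCompact A ∧
  (∃ U : Set ℝ, IsOpen U ∧ U.Nonempty ∧ ResidualIn (basin f A) U) ∧
  ∀ A' : Set ℝ, IsClosed A' → A' ⊂ A → MapsTo f A' A' →
    ∃ U : Set ℝ, IsOpen U ∧ U.Nonempty ∧ ResidualIn (basin f A \ basin f A') U

/-- A super-attractor. -/
def IsSuperAttractor (f : ℝ → ℝ) (c : ℝ) (Λ : Set ℝ) : Prop :=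
  ∃ (n : ℕ) (p : ℕ → ℝ), 1 ≤ n ∧
    Λ = insert c (p '' {i : ℕ | 1 ≤ i ∧ i ≤ n}) ∧
    (∀ i, 1 ≤ i → i < n → f (p i) = p (i + 1)) ∧
    f (p n) = c ∧
    (Tendsto f (𝓝[>] c) (𝓝 (p 1)) ∨ Tendsto f (𝓝[<] c) (𝓝 (p 1)))

/-- A Cherry map: no super-attractor, and the critical point is in the ω-limit set of
every point of some neighborhood of the critical point. -/
def IsCherryMap (f : ℝ → ℝ) (c : ℝ) : Prop :=
  (¬ ∃ Λ : Set ℝ, IsSuperAttractor f c Λ) ∧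
  ∃ δ > 0, ∀ x ∈ Ioo (c - δ) (c + δ), GoodOrbit f c x → c ∈ omegaLim f x

/-- A Cherry attractor: `f` is a Cherry map and `Λ` is the common ω-limit set of
the two lateral critical values. -/
def IsCherryAttractor (f : ℝ → ℝ) (c : ℝ) (Λ : Set ℝ) : Prop :=
  IsCherryMap f c ∧ ∃ vm vp : ℝ,
    Tendsto f (𝓝[<] c) (𝓝 vm) ∧ Tendsto f (𝓝[>] c) (𝓝 vp) ∧
    Λ = omegaLim f vm ∧ Λ = omegaLim f vp

/-- A solenoidal attractor: contained in the intersection of the nice trapping regions of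
an infinite nested chain of renormalization intervals. -/
def IsSolenoidalAttractor (f : ℝ → ℝ) (c : ℝ) (Λ : Set ℝ) : Prop :=
  ∃ a b : ℕ → ℝ,
    (∀ n, IsRenormInterval f c (a n) (b n)) ∧
    (∀ n, Ioo (a (n+1)) (b (n+1)) ⊂ Ioo (a n) (b n)) ∧
    Λ ⊆ ⋂ n, niceTrapping f c (a n) (b n)

/-- Lower Lyapunov exponent along the orbit of `x`. -/
def lyapExp (f : ℝ → ℝ) (c x : ℝ) : ℝ :=
  Filter.liminf (fun n : ℕ =>
    Real.log (∏ i ∈ Finset.range n, |derivWithin f (lorDom c) (f^[i] x)|) / n)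
    Filter.atTop

/-- A chaotic set: transitive, dense periodic points, positive topological entropy,
and a dense set of points with Lyapunov exponent bounded below by a positive constant. -/
def IsChaotic (f : ℝ → ℝ) (c : ℝ) (Λ : Set ℝ) : Prop :=
  (∃ x ∈ Λ, omegaLim f x = Λ) ∧
  Λ ⊆ closure {p | p ∈ Λ ∧ IsPer f p} ∧
  0 < Dynamics.coverEntropy f Λ ∧
  ∃ lam : ℝ, 0 < lam ∧ Λ ⊆ closure {x | x ∈ Λ ∧ lam < lyapExp f c x}

/-- A cycle of intervals: a transitive finite union of nontrivial pairwise disjoint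
closed intervals. -/
def IsCycleOfIntervals (f : ℝ → ℝ) (Λ : Set ℝ) : Prop :=
  (∃ x ∈ Λ, omegaLim f x = Λ) ∧
  ∃ (N : ℕ) (a b : Fin N → ℝ), 0 < N ∧ (∀ i, a i < b i) ∧
    (∀ i j, i ≠ j → Disjoint (Icc (a i) (b i)) (Icc (a j) (b j))) ∧
    Λ = ⋃ i, Icc (a i) (b i)

/-- A Cantor set in `ℝ`. -/
def IsCantorSet (S : Set ℝ) : Prop :=
  IsCompact S ∧ Perfect S ∧ IsTotallyDisconnected S

/-- A non-wandering point (relative to `[0,1]`). -/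
def IsNonWandering (f : ℝ → ℝ) (y : ℝ) : Prop :=
  ∀ U : Set ℝ, IsOpen U → y ∈ U →
    ∃ n : ℕ, 1 ≤ n ∧ (f^[n] '' (U ∩ Icc 0 1) ∩ U).Nonempty

/-- A nice interval `(a,b) ∋ c`. -/
def IsNiceInterval (f : ℝ → ℝ) (c a b : ℝ) : Prop :=
  0 ≤ a ∧ a < c ∧ c < b ∧ b ≤ 1 ∧
  (∀ n : ℕ, 1 ≤ n → f^[n] a ∉ Ioo a b) ∧
  (∀ n : ℕ, 1 ≤ n → f^[n] b ∉ Ioo a b) ∧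
  (∀ p : ℝ, IsAttractingPeriodicOrbit f p →
    (a ∈ omegaBasin f (posOrbit f p) → a ∈ posOrbit f p) ∧
    (b ∈ omegaBasin f (posOrbit f p) → b ∈ posOrbit f p))

/-- Negative Schwarzian derivative on `[0,1] \ {c}`. -/
def HasNegSchwarzian (f : ℝ → ℝ) (c : ℝ) : Prop :=
  ∀ x ∈ lorDom c, derivWithin f (lorDom c) x ≠ 0 →
    iteratedDerivWithin 3 f (lorDom c) x / derivWithin f (lorDom c) x -
      (3/2) * (iteratedDerivWithin 2 f (lorDom c) x / derivWithin f (lorDom c) x) ^ 2 < 0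

/-- `ω_f(x) = Λ` on a relatively open and dense subset of `[0,1]`. -/
def OmegaEqOnOpenDense (f : ℝ → ℝ) (c : ℝ) (Λ : Set ℝ) : Prop :=
  ∃ U : Set ℝ, IsOpen U ∧ Icc (0:ℝ) 1 ⊆ closure (U ∩ Icc (0:ℝ) 1) ∧
    ∀ x ∈ U ∩ Icc (0:ℝ) 1, GoodOrbit f c x → omegaLim f x = Λ

/-- `ω_f(x) = Λ` on a residual subset of `[0,1]`. -/
def OmegaEqOnResidual (f : ℝ → ℝ) (c : ℝ) (Λ : Set ℝ) : Prop :=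
  ResidualIn {x | GoodOrbit f c x → omegaLim f x = Λ} (Icc (0:ℝ) 1)

end

/-!
Write `W` for the union of the wandering intervals and call an open subinterval of `[0,1]` whose
points never reach `c` a homterval. Without periodic attractors every homterval wanders: if two of
its images met, an iterate `f^[k]` would map the union of their forward images, an interval,
monotonically into itself, so either `f^[k] = id` on an interval or an open set of orbits
converges to one periodic cycle; and since disjoint images have summable lengths, all points of a
homterval share their ω-limit set, which therefore cannot be a periodic orbit.

If `W` missed an interval `U`, some point of `U` would be mapped onto `c` by an iterate, and
pulling wandering intervals back along that branch shows that `W` misses a neighbourhood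
`(c - δ, c + δ)` of `c`. The orbit of a component `(p, q)` of `W` then stays `δ`-away from `c`,
where `log f'` is Lipschitz. As the images of `(p, q)` have total length at most `1`, every `f^[n]`
has uniformly bounded distortion on a slightly larger interval `(p - ε, q)`, whose orbit therefore
also avoids `c`. Hence `(p - ε, q) ⊆ W`, contradicting the maximality of the component.
-/

open Function MeasureTheory

section RealLine

theorem Set.OrdConnected.eq_Ioo_of_isOpen {A : Set ℝ} (hA : A.OrdConnected) (hopen : IsOpen A)
    (hne : A.Nonempty) (hbdd : Bornology.IsBounded A) : ∃ a b, a < b ∧ A = Ioo a b := by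
  have inner : ∀ x ∈ A, sInf A < x ∧ x < sSup A := by
    intro x hx
    obtain ⟨a, b, ⟨hax, hxb⟩, hab⟩ := mem_nhds_iff_exists_Ioo_subset.1 (hopen.mem_nhds hx)
    obtain ⟨a', ha'⟩ := exists_between hax
    obtain ⟨b', hb'⟩ := exists_between hxb
    exact ⟨(csInf_le hbdd.bddBelow (hab ⟨ha'.1, ha'.2.trans hxb⟩)).trans_lt ha'.2,
      hb'.1.trans_le (le_csSup hbdd.bddAbove (hab ⟨hax.trans hb'.1, hb'.2⟩))⟩
  obtain ⟨x, hx⟩ := hne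
  refine ⟨sInf A, sSup A, (inner x hx).1.trans (inner x hx).2, Subset.antisymm inner ?_⟩
  exact IsConnected.Ioo_csInf_csSup_subset ⟨⟨x, hx⟩, hA.isPreconnected⟩ hbdd.bddBelow
    hbdd.bddAbove

theorem StrictMonoOn.isOpen_image {F : ℝ → ℝ} {A : Set ℝ} (hmono : StrictMonoOn F A)
    (hcont : ContinuousOn F A) (hopen : IsOpen A) : IsOpen (F '' A) := by
  rw [isOpen_iff_mem_nhds]
  rintro _ ⟨x, hx, rfl⟩
  obtain ⟨a, b, ⟨hax, hxb⟩, hab⟩ := mem_nhds_iff_exists_Ioo_subset.1 (hopen.mem_nhds hx)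
  obtain ⟨a', ha'⟩ := exists_between hax
  obtain ⟨b', hb'⟩ := exists_between hxb
  have hsub : Icc a' b' ⊆ A := fun y hy => hab ⟨ha'.1.trans_le hy.1, hy.2.trans_lt hb'.2⟩
  have himage := ContinuousOn.image_Ioo_of_strictMonoOn (ha'.2.trans hb'.1).le (hcont.mono hsub)
    (hmono.mono hsub)
  refine mem_of_superset (isOpen_Ioo.mem_nhds ?_)
    (himage ▸ image_mono (Ioo_subset_Icc_self.trans hsub))
  exact ⟨hmono (hsub ⟨le_rfl, (ha'.2.trans hb'.1).le⟩) hx ha'.2,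
    hmono hx (hsub ⟨(ha'.2.trans hb'.1).le, le_rfl⟩) hb'.1⟩

theorem Icc_subset_Icc_of_Ioo_subset {a b a' b' : ℝ} (hab : a < b) (h : Ioo a b ⊆ Icc a' b') :
    Icc a b ⊆ Icc a' b' :=
  closure_Ioo hab.ne ▸ closure_minimal h isClosed_Icc

theorem Icc_subset_closure_of_forall_Ioo {S : Set ℝ} {a b : ℝ} (hab : a < b)
    (h : ∀ u v, u < v → Ioo u v ⊆ Ioo a b → (Ioo u v ∩ S).Nonempty) : Icc a b ⊆ closure S := by
  rw [← closure_Ioo hab.ne]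
  refine closure_minimal (fun x hx => mem_closure_iff.2 fun o ho hxo => ?_) isClosed_closure
  obtain ⟨u, v, hxuv, huv⟩ := mem_nhds_iff_exists_Ioo_subset.1
    (inter_mem (ho.mem_nhds hxo) (isOpen_Ioo.mem_nhds hx))
  obtain ⟨y, hyuv, hyS⟩ := h u v (hxuv.1.trans hxuv.2) (huv.trans inter_subset_right)
  exact ⟨y, (huv hyuv).1, hyS⟩

theorem tendsto_of_mem_uIcc {u v y : ℕ → ℝ} {L : ℝ} (hu : Tendsto u atTop (𝓝 L))
    (hv : Tendsto v atTop (𝓝 L)) (hy : ∀ m, y m ∈ uIcc (u m) (v m)) :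
    Tendsto y atTop (𝓝 L) := by
  refine tendsto_of_tendsto_of_tendsto_of_le_of_le ?_ ?_ (fun m => (hy m).1) (fun m => (hy m).2)
  · simpa using hu.min hv
  · simpa using hu.max hv

theorem Set.OrdConnected.dist_le_toReal_volume {S : Set ℝ} (hS : S.OrdConnected)
    (hbdd : Bornology.IsBounded S) {x y : ℝ} (hx : x ∈ S) (hy : y ∈ S) :
    dist x y ≤ (volume S).toReal := by
  calc dist x y = (volume (uIcc x y)).toReal := by
        rw [Real.volume_interval, ENNReal.toReal_ofReal (abs_nonneg _), Real.dist_eq, abs_sub_comm]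
    _ ≤ (volume S).toReal :=
        ENNReal.toReal_mono hbdd.measure_lt_top.ne (measure_mono (hS.uIcc_subset hx hy))

theorem sum_toReal_volume_le {s : ℕ → Set ℝ} {B : Set ℝ} (hs : ∀ n, MeasurableSet (s n))
    (hd : Pairwise (Disjoint on s)) (hB : ∀ n, s n ⊆ B) (hBfin : volume B ≠ ⊤) (N : ℕ) :
    ∑ n ∈ Finset.range N, (volume (s n)).toReal ≤ (volume B).toReal := by
  rw [← ENNReal.toReal_sum fun n _ => ne_top_of_le_ne_top hBfin (measure_mono (hB n)),
    ← measure_biUnion_finset (fun i _ j _ hij => hd hij) fun n _ => hs n]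
  exact ENNReal.toReal_mono hBfin (measure_mono (iUnion₂_subset fun n _ => hB n))

theorem sub_mul_le_exp_mul_of_hasDerivAt {g g' : ℝ → ℝ} {u a v L : ℝ} (hua : u < a) (hav : a < v)
    (hcont : ContinuousOn g (Icc u v)) (hderiv : ∀ x ∈ Ioo u v, HasDerivAt g (g' x) x)
    (hpos : ∀ x ∈ Ioo u v, 0 < g' x) (hL : 0 ≤ L)
    (hdist : ∀ x ∈ Ioo u v, ∀ y ∈ Ioo u v, x ≤ y → g' x ≤ g' y * Real.exp (L * (y - x))) :
    (g a - g u) * (v - a) ≤ Real.exp (L * (v - u)) * (a - u) * (g v - g a) := by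
  obtain ⟨ξ, hξ, hξeq⟩ := exists_hasDerivAt_eq_slope g g' hua
    (hcont.mono (Icc_subset_Icc_right hav.le)) fun x hx => hderiv x ⟨hx.1, hx.2.trans hav⟩
  obtain ⟨η, hη, hηeq⟩ := exists_hasDerivAt_eq_slope g g' hav
    (hcont.mono (Icc_subset_Icc_left hua.le)) fun x hx => hderiv x ⟨hua.trans hx.1, hx.2⟩
  rw [eq_div_iff (sub_pos.2 hua).ne'] at hξeq
  rw [eq_div_iff (sub_pos.2 hav).ne'] at hηeq
  have hη' : η ∈ Ioo u v := ⟨hua.trans hη.1, hη.2⟩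
  have hξη : g' ξ ≤ g' η * Real.exp (L * (v - u)) := by
    refine (hdist ξ ⟨hξ.1, hξ.2.trans hav⟩ η hη' (hξ.2.trans hη.1).le).trans ?_
    exact mul_le_mul_of_nonneg_left (Real.exp_le_exp.2
      (mul_le_mul_of_nonneg_left (by linarith [hξ.1, hη.2]) hL)) (hpos η hη').le
  rw [← hξeq, ← hηeq]
  calc g' ξ * (a - u) * (v - a) ≤ g' η * Real.exp (L * (v - u)) * (a - u) * (v - a) :=
        mul_le_mul_of_nonneg_right (mul_le_mul_of_nonneg_right hξη (sub_pos.2 hua).le)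
          (sub_pos.2 hav).le
    _ = Real.exp (L * (v - u)) * (a - u) * (g' η * (v - a)) := by ring

theorem le_or_le_of_disjoint_Ioo {a b s t : ℝ} (hab : a < b) (hst : s < t)
    (h : Disjoint (Ioo a b) (Ioo s t)) : b ≤ s ∨ t ≤ a := by
  rw [Ioo_disjoint_Ioo, min_le_iff, le_max_iff, le_max_iff] at h
  rcases h with (h | h) | (h | h)
  · exact absurd h hab.not_ge
  · exact Or.inl h
  · exact Or.inr h
  · exact absurd h hst.not_ge

end RealLine

section OmegaLimit

variable {f : ℝ → ℝ}

theorem omegaLim_subset_of_iterate_mem {S : Set ℝ} (hS : IsClosed S) {x : ℝ}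
    (h : ∀ n, f^[n] x ∈ S) : omegaLim f x ⊆ S := fun y hy =>
  hS.closure_subset <| Metric.mem_closure_iff.2 fun ε hε =>
    let ⟨n, _, hn⟩ := hy ε hε 0
    ⟨f^[n] x, h n, by rwa [Real.dist_eq, abs_sub_comm]⟩

theorem omegaLim_subset_of_tendsto_sub {x y : ℝ}
    (h : Tendsto (fun n => f^[n] x - f^[n] y) atTop (𝓝 0)) : omegaLim f y ⊆ omegaLim f x := by
  intro z hz ε hε N
  obtain ⟨N₁, hN₁⟩ := Metric.tendsto_atTop.1 h (ε / 2) (half_pos hε)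
  obtain ⟨n, hn, hnz⟩ := hz (ε / 2) (half_pos hε) (max N N₁)
  refine ⟨n, le_of_max_le_left hn, ?_⟩
  have hxy := hN₁ n (le_of_max_le_right hn)
  rw [Real.dist_eq, sub_zero] at hxy
  calc |f^[n] x - z| ≤ |f^[n] x - f^[n] y| + |f^[n] y - z| := abs_sub_le _ _ _
    _ < ε := by linarith

theorem omegaLim_eq_of_tendsto_sub {x y : ℝ}
    (h : Tendsto (fun n => f^[n] x - f^[n] y) atTop (𝓝 0)) : omegaLim f x = omegaLim f y :=
  Subset.antisymm (omegaLim_subset_of_tendsto_sub (by simpa using h.neg))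
    (omegaLim_subset_of_tendsto_sub h)

theorem omegaLim_eq_image_of_tendsto {k : ℕ} (hk : 0 < k) {x : ℝ} {L : ℕ → ℝ}
    (h : ∀ r < k, Tendsto (fun m => f^[k * m + r] x) atTop (𝓝 (L r))) :
    omegaLim f x = L '' Iio k := by
  ext y
  constructor
  · intro hy
    by_contra hyL
    obtain ⟨ρ, hρ, hball⟩ := Metric.isOpen_iff.1 ((finite_Iio k).image L).isClosed.isOpen_compl
      y hyL
    have hclose : ∀ᶠ m in atTop, ∀ r ∈ Iio k, |f^[k * m + r] x - L r| < ρ / 2 :=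
      (eventually_all_finite (finite_Iio k)).2 fun r hr =>
        ((h r hr).eventually (Metric.ball_mem_nhds _ (half_pos hρ))).mono fun _ hm => by
          rwa [Real.dist_eq] at hm
    obtain ⟨M, hM⟩ := eventually_atTop.1 hclose
    obtain ⟨n, hn, hny⟩ := hy (ρ / 2) (half_pos hρ) (M * k)
    have hr : n % k < k := Nat.mod_lt n hk
    have hm := hM (n / k) ((Nat.le_div_iff_mul_le hk).2 hn) (n % k) hr
    rw [Nat.div_add_mod] at hm
    refine hball ?_ ⟨n % k, hr, rfl⟩
    rw [Metric.mem_ball, Real.dist_eq]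
    calc |L (n % k) - y| ≤ |L (n % k) - f^[n] x| + |f^[n] x - y| := abs_sub_le _ _ _
      _ < ρ := by rw [abs_sub_comm] at hm; linarith
  · rintro ⟨r, hr, rfl⟩ ε hε N
    obtain ⟨M, hM⟩ := Metric.tendsto_atTop.1 (h r hr) ε hε
    refine ⟨k * max M N + r, ?_, hM _ (le_max_left M N)⟩
    nlinarith [le_max_right M N]

theorem exists_finite_omegaLim_eq_of_monotoneOn {M : Set ℝ} {a b : ℝ} {k : ℕ} (hk : 0 < k)
    (hmono : ∀ n, MonotoneOn f^[n] M) (hmaps : MapsTo f^[k] M M)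
    (hbdd : ∀ n, MapsTo f^[n] M (Icc a b)) {x₀ : ℝ} (hx₀ : x₀ ∈ M)
    (hconn : uIcc x₀ (f^[k] x₀) ⊆ M) :
    ∃ Λ : Set ℝ, Λ.Finite ∧ ∀ x ∈ uIcc x₀ (f^[k] x₀), omegaLim f x = Λ := by
  have hshift : ∀ m r z, f^[k * (m + 1) + r] z = f^[k * m + r] (f^[k] z) := by
    intro m r z
    rw [← iterate_add_apply]
    congr 1
    ring
  have hconv : ∀ r, ∃ L, Tendsto (fun m => f^[k * m + r] x₀) atTop (𝓝 L) := by
    intro r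
    have hkx₀ : f^[k] x₀ ∈ M := hmaps hx₀
    have hrange : ∀ m, f^[k * m + r] x₀ ∈ Icc a b := fun m => hbdd _ hx₀
    rcases le_total x₀ (f^[k] x₀) with hle | hle
    · have : Monotone fun m => f^[k * m + r] x₀ := monotone_nat_of_le_succ fun m => by
        rw [hshift]
        exact hmono _ hx₀ hkx₀ hle
      exact ⟨_, tendsto_atTop_ciSup this ⟨b, by rintro _ ⟨m, rfl⟩; exact (hrange m).2⟩⟩
    · have : Antitone fun m => f^[k * m + r] x₀ := antitone_nat_of_succ_le fun m => by
        rw [hshift]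
        exact hmono _ hkx₀ hx₀ hle
      exact ⟨_, tendsto_atTop_ciInf this ⟨a, by rintro _ ⟨m, rfl⟩; exact (hrange m).1⟩⟩
  choose L hL using hconv
  refine ⟨L '' Iio k, (finite_Iio k).image L, fun x hx =>
    omegaLim_eq_image_of_tendsto hk fun r _ => ?_⟩
  refine tendsto_of_mem_uIcc (hL r) ((hL r).comp (tendsto_add_atTop_nat 1)) fun m => ?_
  simp only [comp_apply, hshift]
  exact ((hmono _).mono hconn).mapsTo_uIcc hx

theorem isPeriodicAttractor_of_omegaLim_eq {Λ : Set ℝ} (hΛ : Λ.Finite) {U : Set ℝ} (hU : IsOpen U)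
    (hne : U.Nonempty) (hmaps : ∀ n, MapsTo f^[n] U (Icc 0 1))
    (hω : ∀ x ∈ U, omegaLim f x = Λ) : IsPeriodicAttractor f Λ := by
  obtain ⟨x, hx⟩ := hne
  have hΛ01 : Λ ⊆ Icc 0 1 :=
    hω x hx ▸ omegaLim_subset_of_iterate_mem isClosed_Icc fun n => hmaps n hx
  have hsub : U ⊆ {y | y ∈ Icc (0 : ℝ) 1 ∧ omegaLim f y = Λ} := fun y hy =>
    ⟨hmaps 0 hy, hω y hy⟩
  exact ⟨hΛ, hΛ01, x, interior_maximal hsub hU hx⟩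

theorem IsPer.posOrbit_finite {p : ℝ} (hp : IsPer f p) : (posOrbit f p).Finite := by
  obtain ⟨m, hm1, hm⟩ := hp
  refine ((finite_Iio m).image fun i => f^[i] p).subset ?_
  rintro _ ⟨n, rfl⟩
  refine ⟨n % m, Nat.mod_lt n hm1, ?_⟩
  calc f^[n % m] p = f^[n % m] (f^[m * (n / m)] p) := by rw [iterate_mul, iterate_fixed hm]
    _ = f^[n] p := by rw [← iterate_add_apply, Nat.mod_add_div]

end OmegaLimit

theorem lorDom_mem_nhds {c x : ℝ} (hx : x ∈ Ioo (0 : ℝ) 1) (hxc : x ≠ c) : lorDom c ∈ 𝓝 x :=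
  mem_of_superset ((isOpen_Ioo.inter isOpen_compl_singleton).mem_nhds ⟨hx, hxc⟩)
    fun _ hy => ⟨Ioo_subset_Icc_self hy.1, hy.2⟩

theorem uniqueDiffOn_lorDom {c : ℝ} (hc : c ∈ Icc (0 : ℝ) 1) : UniqueDiffOn ℝ (lorDom c) := by
  rintro x ⟨hx, hxc⟩
  rcases Ne.lt_or_gt hxc with h | h
  · exact (uniqueDiffOn_Ico 0 c x ⟨hx.1, h⟩).mono fun y hy =>
      ⟨⟨hy.1, hy.2.le.trans hc.2⟩, hy.2.ne⟩
  · exact (uniqueDiffOn_Ioc c 1 x ⟨h, hx.2⟩).mono fun y hy =>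
      ⟨⟨hc.1.trans hy.1.le, hy.2⟩, hy.1.ne'⟩

def IsHomterval (f : ℝ → ℝ) (c : ℝ) (I : Set ℝ) : Prop :=
  (∃ a b : ℝ, a < b ∧ I = Ioo a b) ∧ I ⊆ Icc 0 1 ∧ ∀ n : ℕ, ∀ x ∈ I, f^[n] x ≠ c

namespace IsHomterval

variable {f : ℝ → ℝ} {c : ℝ} {I : Set ℝ}

theorem isOpen (hI : IsHomterval f c I) : IsOpen I := by
  obtain ⟨⟨a, b, -, rfl⟩, -⟩ := hI
  exact isOpen_Ioo

theorem ordConnected (hI : IsHomterval f c I) : I.OrdConnected := by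
  obtain ⟨⟨a, b, -, rfl⟩, -⟩ := hI
  exact ordConnected_Ioo

theorem nonempty (hI : IsHomterval f c I) : I.Nonempty := by
  obtain ⟨⟨a, b, hab, rfl⟩, -⟩ := hI
  exact nonempty_Ioo.2 hab

theorem isBounded (hI : IsHomterval f c I) : Bornology.IsBounded I :=
  Metric.isBounded_Icc (0 : ℝ) 1 |>.subset hI.2.1

end IsHomterval

theorem IsWanderingInterval.isHomterval {f : ℝ → ℝ} {c : ℝ} {I : Set ℝ}
    (hI : IsWanderingInterval f c I) : IsHomterval f c I :=
  ⟨hI.1, hI.2.1, hI.2.2.1⟩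

def wanderingSet (f : ℝ → ℝ) (c : ℝ) : Set ℝ :=
  {x | ∃ I : Set ℝ, IsWanderingInterval f c I ∧ x ∈ I}

section WanderingSet

variable {f : ℝ → ℝ} {c : ℝ}

theorem IsWanderingInterval.subset_wanderingSet {I : Set ℝ} (hI : IsWanderingInterval f c I) :
    I ⊆ wanderingSet f c :=
  fun _ hx => ⟨I, hI, hx⟩

theorem isOpen_wanderingSet : IsOpen (wanderingSet f c) :=
  isOpen_iff_forall_mem_open.2 fun _ ⟨I, hI, hx⟩ =>
    ⟨I, hI.subset_wanderingSet, hI.isHomterval.isOpen, hx⟩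

theorem wanderingSet_subset_Icc : wanderingSet f c ⊆ Icc 0 1 :=
  fun _ ⟨_, hI, hx⟩ => hI.2.1 hx

theorem iterate_ne_of_mem_wanderingSet {x : ℝ} (hx : x ∈ wanderingSet f c) (n : ℕ) :
    f^[n] x ≠ c :=
  let ⟨_, hI, hxI⟩ := hx
  hI.2.2.1 n x hxI

end WanderingSet

namespace IsContractingLorenz

variable {f : ℝ → ℝ} {c : ℝ}

theorem strictMonoOn_of_convex (hf : IsContractingLorenz f c) {D : Set ℝ} (hD : Convex ℝ D)
    (hDc : D ⊆ lorDom c) : StrictMonoOn f D :=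
  strictMonoOn_of_deriv_pos hD (hf.smooth.continuousOn.mono hDc) fun x hx => by
    have hnhds : lorDom c ∈ 𝓝 x :=
      mem_of_superset (isOpen_interior.mem_nhds hx) (interior_subset.trans hDc)
    rw [← derivWithin_of_mem_nhds hnhds]
    exact hf.deriv_pos x (mem_of_mem_nhds hnhds)

theorem iterate_mem_Icc (hf : IsContractingLorenz f c) {x : ℝ} (hx : x ∈ Icc (0 : ℝ) 1) {n : ℕ}
    (h : ∀ i < n, f^[i] x ≠ c) : f^[n] x ∈ Icc 0 1 := by
  induction n with
  | zero => exact hx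
  | succ n ih =>
    rw [iterate_succ_apply']
    exact hf.maps ⟨ih fun i hi => h i (hi.trans n.lt_succ_self), h n n.lt_succ_self⟩

theorem image_iterate_subset_lorDom (hf : IsContractingLorenz f c) {A : Set ℝ}
    (hA01 : A ⊆ Icc 0 1) {n : ℕ} (h : ∀ x ∈ A, ∀ i < n + 1, f^[i] x ≠ c) :
    f^[n] '' A ⊆ lorDom c := by
  rintro _ ⟨x, hx, rfl⟩
  exact ⟨hf.iterate_mem_Icc (hA01 hx) fun i hi => h x hx i (hi.trans n.lt_succ_self),
    h x hx n n.lt_succ_self⟩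

theorem ordConnected_image_iterate (hf : IsContractingLorenz f c) {A : Set ℝ}
    (hA : A.OrdConnected) (hA01 : A ⊆ Icc 0 1) {n : ℕ} (h : ∀ x ∈ A, ∀ i < n, f^[i] x ≠ c) :
    (f^[n] '' A).OrdConnected := by
  induction n with
  | zero => simpa using hA
  | succ n ih =>
    rw [iterate_succ', image_comp]
    exact ((ih fun x hx i hi => h x hx i (hi.trans n.lt_succ_self)).isPreconnected.image f
      (hf.smooth.continuousOn.mono (hf.image_iterate_subset_lorDom hA01 h))).ordConnected

theorem strictMonoOn_iterate (hf : IsContractingLorenz f c) {A : Set ℝ} (hA : A.OrdConnected)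
    (hA01 : A ⊆ Icc 0 1) {n : ℕ} (h : ∀ x ∈ A, ∀ i < n, f^[i] x ≠ c) :
    StrictMonoOn f^[n] A := by
  induction n with
  | zero => exact strictMono_id.strictMonoOn A
  | succ n ih =>
    have h' : ∀ x ∈ A, ∀ i < n, f^[i] x ≠ c := fun x hx i hi => h x hx i (hi.trans n.lt_succ_self)
    rw [iterate_succ']
    exact (hf.strictMonoOn_of_convex (hf.ordConnected_image_iterate hA hA01 h').convex
      (hf.image_iterate_subset_lorDom hA01 h)).comp (ih h') (mapsTo_image _ _)

theorem continuousOn_iterate (hf : IsContractingLorenz f c) {A : Set ℝ} (hA01 : A ⊆ Icc 0 1)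
    {n : ℕ} (h : ∀ x ∈ A, ∀ i < n, f^[i] x ≠ c) : ContinuousOn f^[n] A := by
  induction n with
  | zero => exact continuousOn_id
  | succ n ih =>
    rw [iterate_succ']
    exact (hf.smooth.continuousOn.mono (hf.image_iterate_subset_lorDom hA01 h)).comp
      (ih fun x hx i hi => h x hx i (hi.trans n.lt_succ_self)) (mapsTo_image _ _)

theorem isHomterval_image_iterate (hf : IsContractingLorenz f c) {I : Set ℝ}
    (hI : IsHomterval f c I) (n : ℕ) : IsHomterval f c (f^[n] '' I) := by
  have h : ∀ x ∈ I, ∀ i < n, f^[i] x ≠ c := fun x hx i _ => hI.2.2 i x hx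
  have h01 : f^[n] '' I ⊆ Icc 0 1 := by
    rintro _ ⟨x, hx, rfl⟩
    exact hf.iterate_mem_Icc (hI.2.1 hx) fun i _ => hI.2.2 i x hx
  refine ⟨(hf.ordConnected_image_iterate hI.ordConnected hI.2.1 h).eq_Ioo_of_isOpen
      ((hf.strictMonoOn_iterate hI.ordConnected hI.2.1 h).isOpen_image
        (hf.continuousOn_iterate hI.2.1 h) hI.isOpen)
      (hI.nonempty.image _) ((Metric.isBounded_Icc 0 1).subset h01), h01, ?_⟩
  rintro m _ ⟨x, hx, rfl⟩
  rw [← iterate_add_apply]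
  exact hI.2.2 _ x hx

theorem exists_mapsTo_iterate_of_meets (hf : IsContractingLorenz f c) {K : Set ℝ}
    (hK : IsHomterval f c K) {k : ℕ} (hmeet : (K ∩ f^[k] '' K).Nonempty) :
    ∃ M : Set ℝ, K ⊆ M ∧ M.OrdConnected ∧ M ⊆ Icc 0 1 ∧ MapsTo f^[k] M M ∧
      ∀ x ∈ M, ∀ n, f^[n] x ≠ c := by
  obtain ⟨z, hzK, w, hwK, hwz⟩ := hmeet
  have hpieces := fun m => hf.isHomterval_image_iterate hK (k * m)
  have hsucc : ∀ m x, f^[k * (m + 1)] x = f^[k * m] (f^[k] x) := fun m x => by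
    rw [← iterate_add_apply, mul_add_one]
  have hconn : IsPreconnected (⋃ m, f^[k * m] '' K) :=
    IsPreconnected.iUnion_of_chain (fun m => (hpieces m).ordConnected.isPreconnected) fun m =>
      ⟨f^[k * m] z, mem_image_of_mem _ hzK, w, hwK, by rw [Order.succ_eq_add_one, hsucc, hwz]⟩
  refine ⟨⋃ m, f^[k * m] '' K, fun x hx => mem_iUnion.2 ⟨0, by simpa using hx⟩,
    hconn.ordConnected, iUnion_subset fun m => (hpieces m).2.1, fun x hx => ?_, fun x hx n => ?_⟩
  · obtain ⟨m, y, hy, rfl⟩ := mem_iUnion.1 hx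
    refine mem_iUnion.2 ⟨m + 1, y, hy, ?_⟩
    rw [hsucc, ← iterate_add_apply, ← iterate_add_apply, add_comm]
  · obtain ⟨m, hm⟩ := mem_iUnion.1 hx
    exact (hpieces m).2.2 n x hm

theorem disjoint_image_iterate_of_lt (hf : IsContractingLorenz f c)
    (hpa : HasNoPeriodicAttractor f) {I : Set ℝ} (hI : IsHomterval f c I) {i j : ℕ}
    (hij : i < j) : Disjoint (f^[i] '' I) (f^[j] '' I) := by
  rw [disjoint_iff_inter_eq_empty, ← not_nonempty_iff_eq_empty, ← Nat.sub_add_cancel hij.le,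
    iterate_add, image_comp]
  intro hmeet
  have hK := hf.isHomterval_image_iterate hI i
  obtain ⟨M, hKM, hM, hM01, hmaps, hMc⟩ := hf.exists_mapsTo_iterate_of_meets hK hmeet
  by_cases hid : ∀ x ∈ f^[i] '' I, f^[j - i] x = x
  · obtain ⟨⟨a, b, hab, hKab⟩, -⟩ := hK
    exact hf.no_trivial_dynamics ⟨a, b, j - i, hab, by omega, fun x hx => hid x (hKab ▸ hx)⟩
  push Not at hid
  obtain ⟨x₀, hx₀K, hx₀⟩ := hid
  have hsub : uIcc x₀ (f^[j - i] x₀) ⊆ M := hM.uIcc_subset (hKM hx₀K) (hmaps (hKM hx₀K))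
  have hmem : ∀ x ∈ M, ∀ n, f^[n] x ∈ Icc 0 1 := fun x hx n =>
    hf.iterate_mem_Icc (hM01 hx) fun i _ => hMc x hx i
  obtain ⟨Λ, hΛ, hω⟩ := exists_finite_omegaLim_eq_of_monotoneOn (by omega)
    (fun n => (hf.strictMonoOn_iterate hM hM01 fun x hx i _ => hMc x hx i).monotoneOn) hmaps
    (fun n x hx => hmem x hx n) (hKM hx₀K) hsub
  exact hpa ⟨Λ, isPeriodicAttractor_of_omegaLim_eq hΛ isOpen_Ioo
    (nonempty_Ioo.2 (min_lt_max.2 hx₀.symm))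
    (fun n x hx => hmem x (hsub (Ioo_subset_Icc_self hx)) n)
    fun x hx => hω x (Ioo_subset_Icc_self hx)⟩

theorem pairwise_disjoint_image_iterate (hf : IsContractingLorenz f c)
    (hpa : HasNoPeriodicAttractor f) {I : Set ℝ} (hI : IsHomterval f c I) :
    Pairwise (Disjoint on fun n => f^[n] '' I) := fun _ _ hij =>
  hij.lt_or_gt.elim (hf.disjoint_image_iterate_of_lt hpa hI) fun h =>
    (hf.disjoint_image_iterate_of_lt hpa hI h).symm

theorem omegaLim_eq_of_mem_isHomterval (hf : IsContractingLorenz f c)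
    (hpa : HasNoPeriodicAttractor f) {I : Set ℝ} (hI : IsHomterval f c I) {x y : ℝ}
    (hx : x ∈ I) (hy : y ∈ I) : omegaLim f x = omegaLim f y := by
  have hImg := hf.isHomterval_image_iterate hI
  have hsum := sum_toReal_volume_le (fun n => (hImg n).isOpen.measurableSet)
    (hf.pairwise_disjoint_image_iterate hpa hI) (fun n => (hImg n).2.1) (by simp)
  refine omegaLim_eq_of_tendsto_sub <| squeeze_zero_norm (fun n => ?_)
    (summable_of_sum_range_le (fun _ => ENNReal.toReal_nonneg) hsum).tendsto_atTop_zero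
  rw [← dist_eq_norm]
  exact (hImg n).ordConnected.dist_le_toReal_volume (hImg n).isBounded (mem_image_of_mem _ hx)
    (mem_image_of_mem _ hy)

theorem isWanderingInterval_of_isHomterval (hf : IsContractingLorenz f c)
    (hpa : HasNoPeriodicAttractor f) {I : Set ℝ} (hI : IsHomterval f c I) :
    IsWanderingInterval f c I := by
  refine ⟨hI.1, hI.2.1, hI.2.2, fun i j _ _ hij => hf.pairwise_disjoint_image_iterate hpa hI hij,
    fun p hp => disjoint_left.2 fun x hx hxp => ?_⟩
  exact hpa ⟨omegaLim f x, isPeriodicAttractor_of_omegaLim_eq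
    (hp.1.posOrbit_finite.subset hxp) hI.isOpen hI.nonempty
    (fun n y hy => hf.iterate_mem_Icc (hI.2.1 hy) fun i _ => hI.2.2 i y hy)
    fun y hy => hf.omegaLim_eq_of_mem_isHomterval hpa hI hy hx⟩

theorem continuousAt_iterate (hf : IsContractingLorenz f c) {z : ℝ} {n : ℕ}
    (h : ∀ i < n, f^[i] z ∈ Ioo 0 1 ∧ f^[i] z ≠ c) : ContinuousAt f^[n] z := by
  induction n with
  | zero => exact continuousAt_id
  | succ n ih =>
    rw [iterate_succ']
    obtain ⟨h01, hc⟩ := h n n.lt_succ_self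
    exact (hf.smooth.continuousOn.continuousAt (lorDom_mem_nhds h01 hc)).comp
      (ih fun i hi => h i (hi.trans n.lt_succ_self))

theorem iterate_mem_Ioo_of_iterate_eq (hf : IsContractingLorenz f c) {z : ℝ}
    (hz : z ∈ Icc (0 : ℝ) 1) {n : ℕ} (hn : f^[n] z = c) (hmin : ∀ i < n, f^[i] z ≠ c) {i : ℕ}
    (hi : i < n) : f^[i] z ∈ Ioo 0 1 := by
  have h01 := hf.iterate_mem_Icc hz fun j hj => hmin j (hj.trans hi)
  have hfix : ∀ y, f y = y → f^[i] z = y → c = y := fun y hy hzy => by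
    rw [← hn, ← Nat.sub_add_cancel hi.le, iterate_add_apply, hzy, iterate_fixed hy]
  exact ⟨h01.1.lt_of_ne fun h0 => hf.c_mem.1.ne' (hfix 0 hf.map0 h0.symm),
    h01.2.lt_of_ne fun h1 => hf.c_mem.2.ne (hfix 1 hf.map1 h1)⟩

theorem eventually_iterate_ne (hf : IsContractingLorenz f c) {z : ℝ} (hz : z ∈ Icc (0 : ℝ) 1)
    {n : ℕ} (hn : f^[n] z = c) (hmin : ∀ i < n, f^[i] z ≠ c) :
    ∀ᶠ x in 𝓝 z, ∀ i ∈ Iio n, f^[i] x ≠ c :=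
  (eventually_all_finite (finite_Iio _)).2 fun i hi =>
    (hf.continuousAt_iterate fun j hj => ⟨hf.iterate_mem_Ioo_of_iterate_eq hz hn hmin
      (hj.trans hi), hmin j (hj.trans hi)⟩).eventually_ne (hmin i hi)

theorem isHomterval_subset_wanderingSet (hf : IsContractingLorenz f c)
    (hpa : HasNoPeriodicAttractor f) {I : Set ℝ} (hI : IsHomterval f c I) :
    I ⊆ wanderingSet f c :=
  (hf.isWanderingInterval_of_isHomterval hpa hI).subset_wanderingSet

theorem exists_Ioo_crit_disjoint_wanderingSet (hf : IsContractingLorenz f c)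
    (hpa : HasNoPeriodicAttractor f) {u v : ℝ} (huv : u < v) (h01 : Ioo u v ⊆ Icc 0 1)
    (hW : Disjoint (Ioo u v) (wanderingSet f c)) :
    ∃ δ > 0, Disjoint (Ioo (c - δ) (c + δ)) (wanderingSet f c) := by
  have hhit : ∃ z ∈ Ioo u v, ∃ n, f^[n] z = c := by
    by_contra! hc
    obtain ⟨x, hx⟩ := nonempty_Ioo.2 huv
    exact disjoint_left.1 hW hx (hf.isHomterval_subset_wanderingSet hpa
      ⟨⟨u, v, huv, rfl⟩, h01, fun n x hx => hc x hx n⟩ hx)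
  obtain ⟨z, hz, hex⟩ := hhit
  classical
  have hn : f^[Nat.find hex] z = c := Nat.find_spec hex
  obtain ⟨a, b, hzab, hab⟩ := mem_nhds_iff_exists_Ioo_subset.1 <|
    Filter.Eventually.and (isOpen_Ioo.mem_nhds hz) <|
      hf.eventually_iterate_ne (h01 hz) hn fun i hi => Nat.find_min hex hi
  have hA01 : Ioo a b ⊆ Icc 0 1 := fun x hx => h01 (hab hx).1
  have hAc : ∀ x ∈ Ioo a b, ∀ i < Nat.find hex, f^[i] x ≠ c := fun x hx i hi => (hab hx).2 i hi
  have hcont := hf.continuousOn_iterate hA01 hAc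
  obtain ⟨δ, hδ, hball⟩ := Metric.isOpen_iff.1
    ((hf.strictMonoOn_iterate ordConnected_Ioo hA01 hAc).isOpen_image hcont isOpen_Ioo) c
    ⟨z, hzab, hn⟩
  refine ⟨δ, hδ, disjoint_left.2 fun y hy ⟨I, hI, hyI⟩ => ?_⟩
  obtain ⟨x, hx, rfl⟩ := hball (by rwa [Real.ball_eq_Ioo])
  obtain ⟨a', b', hxab', hsub⟩ := mem_nhds_iff_exists_Ioo_subset.1
    ((hcont.isOpen_inter_preimage isOpen_Ioo hI.isHomterval.isOpen).mem_nhds ⟨hx, hyI⟩)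
  have hJ : IsHomterval f c (Ioo a' b') := by
    refine ⟨⟨a', b', hxab'.1.trans hxab'.2, rfl⟩, fun y hy => hA01 (hsub hy).1, fun m y hy => ?_⟩
    rcases lt_or_ge m (Nat.find hex) with hm | hm
    · exact hAc y (hsub hy).1 m hm
    · rw [← Nat.sub_add_cancel hm, iterate_add_apply]
      exact hI.2.2.1 _ _ (hsub hy).2
  exact disjoint_left.1 hW (hab (hsub ⟨hxab'.1, hxab'.2⟩).1).1
    (hf.isHomterval_subset_wanderingSet hpa hJ hxab')

theorem exists_derivWithin_le_mul_exp (hf : IsContractingLorenz f c) {R : Set ℝ}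
    (hR : IsCompact R) (hRc : R ⊆ lorDom c) :
    ∃ L, 0 ≤ L ∧ ∀ x y, x ≤ y → Icc x y ⊆ R →
      derivWithin f (lorDom c) x ≤ derivWithin f (lorDom c) y * Real.exp (L * (y - x)) := by
  set f' := derivWithin f (lorDom c)
  have hUD := uniqueDiffOn_lorDom (Ioo_subset_Icc_self hf.c_mem)
  have hC1 : ContDiffOn ℝ 1 f' (lorDom c) := hf.smooth.derivWithin hUD (by norm_num)
  rcases R.eq_empty_or_nonempty with rfl | hne
  · exact ⟨0, le_rfl, fun x y hxy h => absurd (h (left_mem_Icc.2 hxy)) (notMem_empty x)⟩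
  obtain ⟨x₀, hx₀, hmin⟩ := hR.exists_isMinOn hne (hC1.continuousOn.mono hRc)
  obtain ⟨K, hK⟩ := hR.exists_bound_of_continuousOn
    ((hC1.continuousOn_derivWithin hUD le_rfl).mono hRc)
  have hm : 0 < f' x₀ := hf.deriv_pos x₀ (hRc hx₀)
  refine ⟨K / f' x₀, div_nonneg ((norm_nonneg _).trans (hK x₀ hx₀)) hm.le,
    fun x y hxy hxyR => ?_⟩
  have hlip := Convex.norm_image_sub_le_of_norm_hasDerivWithin_le
    (fun z hz => ((hC1.differentiableOn one_ne_zero z (hRc (hxyR hz))).hasDerivWithinAt.mono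
      (hxyR.trans hRc))) (fun z hz => hK z (hxyR hz)) (convex_Icc x y) (left_mem_Icc.2 hxy)
    (right_mem_Icc.2 hxy)
  rw [Real.norm_eq_abs, Real.norm_eq_abs, abs_of_nonneg (sub_nonneg.2 hxy)] at hlip
  have hy : f' x₀ ≤ f' y := hmin (hxyR (right_mem_Icc.2 hxy))
  have hKL : K * (y - x) ≤ f' y * (K / f' x₀ * (y - x)) := by
    calc K * (y - x) = f' x₀ * (K / f' x₀ * (y - x)) := by field_simp
      _ ≤ f' y * (K / f' x₀ * (y - x)) := by
        gcongr
        exact mul_nonneg (div_nonneg ((norm_nonneg _).trans (hK x₀ hx₀)) hm.le)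
          (sub_nonneg.2 hxy)
  calc f' x ≤ f' y + f' y * (K / f' x₀ * (y - x)) := by linarith [neg_abs_le (f' y - f' x)]
    _ = f' y * (K / f' x₀ * (y - x) + 1) := by ring
    _ ≤ f' y * Real.exp (K / f' x₀ * (y - x)) :=
        mul_le_mul_of_nonneg_left (Real.add_one_le_exp _) (hm.trans_le hy).le

theorem sub_mul_le_exp_mul (hf : IsContractingLorenz f c) {R : Set ℝ} (hRc : R ⊆ lorDom c)
    {L : ℝ} (hL : 0 ≤ L) (hdist : ∀ x y, x ≤ y → Icc x y ⊆ R →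
      derivWithin f (lorDom c) x ≤ derivWithin f (lorDom c) y * Real.exp (L * (y - x)))
    {u a v : ℝ} (hua : u < a) (hav : a < v) (huv : Icc u v ⊆ R) :
    (f a - f u) * (v - a) ≤ Real.exp (L * (v - u)) * (a - u) * (f v - f a) := by
  have hnhds : ∀ x ∈ Ioo u v, lorDom c ∈ 𝓝 x := fun x hx =>
    mem_of_superset (isOpen_Ioo.mem_nhds hx) (Ioo_subset_Icc_self.trans (huv.trans hRc))
  refine sub_mul_le_exp_mul_of_hasDerivAt hua hav (hf.smooth.continuousOn.mono (huv.trans hRc))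
    (fun x hx => ?_) (fun x hx => hf.deriv_pos x (mem_of_mem_nhds (hnhds x hx))) hL
    fun x hx y hy hxy => hdist x y hxy ((Icc_subset_Icc hx.1.le hy.2.le).trans huv)
  exact ((hf.smooth.differentiableOn (by norm_num) x
    (mem_of_mem_nhds (hnhds x hx))).hasDerivWithinAt).hasDerivAt (hnhds x hx)

theorem image_iterate_Ioo_of_disjoint (hf : IsContractingLorenz f c) {p q δ : ℝ} (hpq : p < q)
    (hT : IsHomterval f c (Ioo p q)) (hδ : 0 < δ)
    (hmargin : ∀ n, Disjoint (f^[n] '' Ioo p q) (Ioo (c - δ) (c + δ))) (n : ℕ) :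
    f^[n] '' Ioo p q = Ioo (f^[n] p) (f^[n] q) ∧ (f^[n] q ≤ c - δ ∨ c + δ ≤ f^[n] p) := by
  have hside : ∀ n, f^[n] '' Ioo p q = Ioo (f^[n] p) (f^[n] q) →
      f^[n] p < f^[n] q ∧ (f^[n] q ≤ c - δ ∨ c + δ ≤ f^[n] p) := fun n h => by
    have hlt : f^[n] p < f^[n] q := nonempty_Ioo.1 (h ▸ (nonempty_Ioo.2 hpq).image _)
    exact ⟨hlt, le_or_le_of_disjoint_Ioo hlt (by linarith) (h ▸ hmargin n)⟩
  suffices himg : f^[n] '' Ioo p q = Ioo (f^[n] p) (f^[n] q) from ⟨himg, (hside n himg).2⟩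
  induction n with
  | zero => simp
  | succ n ih =>
    obtain ⟨hlt, hs⟩ := hside n ih
    have h01 : Icc (f^[n] p) (f^[n] q) ⊆ Icc 0 1 :=
      Icc_subset_Icc_of_Ioo_subset hlt (ih ▸ (hf.isHomterval_image_iterate hT n).2.1)
    have hlor : Icc (f^[n] p) (f^[n] q) ⊆ lorDom c := fun x hx => ⟨h01 hx, fun hxc => by
      rw [mem_singleton_iff] at hxc
      rcases hs with h | h <;> linarith [hx.1, hx.2]⟩
    rw [iterate_succ', image_comp, ih, comp_apply, comp_apply]
    exact ContinuousOn.image_Ioo_of_strictMonoOn hlt.le (hf.smooth.continuousOn.mono hlor)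
      (hf.strictMonoOn_of_convex (convex_Icc _ _) hlor)

theorem sum_sub_iterate_le_one (hf : IsContractingLorenz f c) (hpa : HasNoPeriodicAttractor f)
    {p q : ℝ} (hpq : p < q) (hT : IsHomterval f c (Ioo p q))
    (himg : ∀ n, f^[n] '' Ioo p q = Ioo (f^[n] p) (f^[n] q)) (n : ℕ) :
    ∑ j ∈ Finset.range n, (f^[j] q - f^[j] p) ≤ 1 :=
  calc ∑ j ∈ Finset.range n, (f^[j] q - f^[j] p)
      = ∑ j ∈ Finset.range n, (volume (f^[j] '' Ioo p q)).toReal :=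
        Finset.sum_congr rfl fun j _ => by
          have hlt := nonempty_Ioo.1 (himg j ▸ (nonempty_Ioo.2 hpq).image _)
          rw [himg, Real.volume_Ioo, ENNReal.toReal_ofReal (sub_pos.2 hlt).le]
    _ ≤ (volume (Icc (0 : ℝ) 1)).toReal := sum_toReal_volume_le
        (fun n => (hf.isHomterval_image_iterate hT n).isOpen.measurableSet)
        (hf.pairwise_disjoint_image_iterate hpa hT)
        (fun n => (hf.isHomterval_image_iterate hT n).2.1) (by simp) n
    _ = 1 := by simp

theorem sub_mul_le_exp_sum_mul (hf : IsContractingLorenz f c) {R : Set ℝ} (hRc : R ⊆ lorDom c)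
    {L : ℝ} (hL : 0 ≤ L) (hdist : ∀ x y, x ≤ y → Icc x y ⊆ R →
      derivWithin f (lorDom c) x ≤ derivWithin f (lorDom c) y * Real.exp (L * (y - x)))
    {u a b : ℝ} (hua : u < a) (hab : a < b) {n : ℕ}
    (hR : ∀ j < n, Icc (f^[j] u) (f^[j] b) ⊆ R) :
    f^[n] u < f^[n] a ∧ f^[n] a < f^[n] b ∧
      (f^[n] a - f^[n] u) * (b - a) ≤
        Real.exp (L * ∑ j ∈ Finset.range n, (f^[j] b - f^[j] u)) * (a - u) *
          (f^[n] b - f^[n] a) := by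
  induction n with
  | zero =>
    simp only [iterate_zero, id, Finset.sum_range_zero, mul_zero, Real.exp_zero, one_mul]
    exact ⟨hua, hab, le_of_eq (by ring)⟩
  | succ n ih =>
    obtain ⟨h1, h2, h3⟩ := ih fun j hj => hR j (hj.trans n.lt_succ_self)
    have hRn := hR n n.lt_succ_self
    have hmono := hf.strictMonoOn_of_convex (convex_Icc _ _) (hRn.trans hRc)
    have hstep := hf.sub_mul_le_exp_mul hRc hL hdist h1 h2 hRn
    have hub := (h1.trans h2).le
    have h2' : f (f^[n] a) < f (f^[n] b) := hmono ⟨h1.le, h2.le⟩ (right_mem_Icc.2 hub) h2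
    simp only [iterate_succ_apply', Finset.sum_range_succ, mul_add, Real.exp_add]
    refine ⟨hmono (left_mem_Icc.2 hub) ⟨h1.le, h2.le⟩ h1, h2', ?_⟩
    set E := Real.exp (L * ∑ j ∈ Finset.range n, (f^[j] b - f^[j] u))
    set e := Real.exp (L * (f^[n] b - f^[n] u))
    refine le_of_mul_le_mul_right ?_ (sub_pos.2 h2)
    calc (f (f^[n] a) - f (f^[n] u)) * (b - a) * (f^[n] b - f^[n] a)
        = (f (f^[n] a) - f (f^[n] u)) * (f^[n] b - f^[n] a) * (b - a) := by ring
      _ ≤ e * (f^[n] a - f^[n] u) * (f (f^[n] b) - f (f^[n] a)) * (b - a) :=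
          mul_le_mul_of_nonneg_right hstep (sub_pos.2 hab).le
      _ = e * (f (f^[n] b) - f (f^[n] a)) * ((f^[n] a - f^[n] u) * (b - a)) := by ring
      _ ≤ e * (f (f^[n] b) - f (f^[n] a)) * (E * (a - u) * (f^[n] b - f^[n] a)) :=
          mul_le_mul_of_nonneg_left h3 (mul_nonneg (Real.exp_pos _).le (sub_pos.2 h2').le)
      _ = E * e * (a - u) * (f (f^[n] b) - f (f^[n] a)) * (f^[n] b - f^[n] a) := by ring

theorem isHomterval_Ioo_of_forall_Icc_subset (hf : IsContractingLorenz f c) {u b : ℝ}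
    (hub : u < b) (hR : ∀ n, Icc (f^[n] u) (f^[n] b) ⊆ lorDom c) : IsHomterval f c (Ioo u b) := by
  have horbit : ∀ n, ∀ x ∈ Icc u b, f^[n] x ∈ Icc (f^[n] u) (f^[n] b) := by
    intro n
    induction n with
    | zero => exact fun x hx => hx
    | succ n ih =>
      intro x hx
      have hmono := (hf.strictMonoOn_of_convex (convex_Icc _ _) (hR n)).monotoneOn
      have hn := ih u (left_mem_Icc.2 hub.le)
      simp only [iterate_succ_apply']
      exact ⟨hmono hn (ih x hx) (ih x hx).1, hmono (ih x hx) (right_mem_Icc.2 hn.2) (ih x hx).2⟩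
  exact ⟨⟨u, b, hub, rfl⟩, fun x hx => (hR 0 (horbit 0 x (Ioo_subset_Icc_self hx))).1,
    fun n x hx => (hR n (horbit n x (Ioo_subset_Icc_self hx))).2⟩

theorem Icc_union_Icc_subset_lorDom (hc : c ∈ Ioo (0 : ℝ) 1) {κ : ℝ} (hκ : 0 < κ) :
    Icc 0 (c - κ) ∪ Icc (c + κ) 1 ⊆ lorDom c := by
  rintro x (hx | hx)
  · exact ⟨⟨hx.1, by linarith [hx.2, hc.2]⟩, (by linarith [hx.2] : x < c).ne⟩
  · exact ⟨⟨by linarith [hx.1, hc.1], hx.2⟩, (by linarith [hx.1] : c < x).ne'⟩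

theorem Icc_iterate_subset_of_small_gap (hf : IsContractingLorenz f c) {κ δ L u p q : ℝ}
    (hκ : 0 < κ) (hκδ : 2 * κ ≤ δ) (hL : 0 ≤ L)
    (hdist : ∀ x y, x ≤ y → Icc x y ⊆ Icc 0 (c - κ) ∪ Icc (c + κ) 1 →
      derivWithin f (lorDom c) x ≤ derivWithin f (lorDom c) y * Real.exp (L * (y - x)))
    (hu : 0 ≤ u) (hup : u < p) (hpq : p < q)
    (hgap : (p - u) * Real.exp (2 * L) ≤ min κ 1 * (q - p))
    (h01 : ∀ n, 0 ≤ f^[n] p ∧ f^[n] q ≤ 1) (hside : ∀ n, f^[n] q ≤ c - δ ∨ c + δ ≤ f^[n] p)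
    (hS : ∀ n, ∑ j ∈ Finset.range n, (f^[j] q - f^[j] p) ≤ 1) (n : ℕ) :
    Icc (f^[n] u) (f^[n] q) ⊆ Icc 0 (c - κ) ∪ Icc (c + κ) 1 := by
  set R := Icc 0 (c - κ) ∪ Icc (c + κ) 1
  have hRc : R ⊆ lorDom c := Icc_union_Icc_subset_lorDom hf.c_mem hκ
  suffices key : ∀ n, f^[n] u < f^[n] p ∧ f^[n] p - f^[n] u ≤ f^[n] q - f^[n] p ∧
      Icc (f^[n] u) (f^[n] q) ⊆ R from (key n).2.2
  intro n
  induction n using Nat.strong_induction_on with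
  | _ n ih =>
  obtain ⟨h1, h2, hratio⟩ := hf.sub_mul_le_exp_sum_mul hRc hL hdist hup hpq
    fun j hj => (ih j hj).2.2
  have hW : ∑ j ∈ Finset.range n, (f^[j] q - f^[j] u) ≤ 2 := by
    have := Finset.sum_le_sum fun j hj => (ih j (Finset.mem_range.1 hj)).2.1
    simp only [Finset.sum_sub_distrib] at this hS ⊢
    linarith [hS n]
  have hℓ : 0 < f^[n] q - f^[n] p := sub_pos.2 h2
  have hg : f^[n] p - f^[n] u ≤ min κ 1 * (f^[n] q - f^[n] p) := by
    refine le_of_mul_le_mul_right (hratio.trans ?_) (sub_pos.2 hpq)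
    calc Real.exp (L * ∑ j ∈ Finset.range n, (f^[j] q - f^[j] u)) * (p - u) *
          (f^[n] q - f^[n] p)
        ≤ (p - u) * Real.exp (2 * L) * (f^[n] q - f^[n] p) := by
          rw [mul_comm (Real.exp _)]
          exact mul_le_mul_of_nonneg_right (mul_le_mul_of_nonneg_left
            (Real.exp_le_exp.2 (by nlinarith)) (sub_pos.2 hup).le) hℓ.le
      _ ≤ min κ 1 * (q - p) * (f^[n] q - f^[n] p) := mul_le_mul_of_nonneg_right hgap hℓ.le
      _ = min κ 1 * (f^[n] q - f^[n] p) * (q - p) := by ring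
  have hu1 : u ≤ 1 := by linarith [show q ≤ 1 from (h01 0).2]
  have hun : 0 ≤ f^[n] u := by
    refine (hf.iterate_mem_Icc ⟨hu, hu1⟩ fun j hj =>
      (hRc ((ih j hj).2.2 (left_mem_Icc.2 ?_))).2).1
    linarith [(ih j hj).1, (ih j hj).2.1]
  have hgκ : f^[n] p - f^[n] u ≤ κ :=
    (hg.trans (mul_le_of_le_one_right (le_min hκ.le zero_le_one) (by linarith [h01 n])))
      |>.trans (min_le_left _ _)
  refine ⟨h1, hg.trans (mul_le_of_le_one_left hℓ.le (min_le_right _ _)), fun x hx => ?_⟩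
  rcases hside n with h | h
  · exact Or.inl ⟨hun.trans hx.1, by linarith [hx.2]⟩
  · exact Or.inr ⟨by linarith [hx.1], hx.2.trans (h01 n).2⟩

theorem exists_isHomterval_Ioo_sub (hf : IsContractingLorenz f c)
    (hpa : HasNoPeriodicAttractor f) {p q δ : ℝ} (hpq : p < q) (hp : 0 < p)
    (hT : IsHomterval f c (Ioo p q)) (hδ : 0 < δ)
    (hmargin : ∀ n, Disjoint (f^[n] '' Ioo p q) (Ioo (c - δ) (c + δ))) :
    ∃ ε > 0, IsHomterval f c (Ioo (p - ε) q) := by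
  have himg := hf.image_iterate_Ioo_of_disjoint hpq hT hδ hmargin
  have h01 : ∀ n, 0 ≤ f^[n] p ∧ f^[n] q ≤ 1 := fun n => by
    have hlt := nonempty_Ioo.1 ((himg n).1 ▸ (nonempty_Ioo.2 hpq).image _)
    have hsub := Icc_subset_Icc_of_Ioo_subset hlt
      ((himg n).1 ▸ (hf.isHomterval_image_iterate hT n).2.1)
    exact ⟨(hsub (left_mem_Icc.2 hlt.le)).1, (hsub (right_mem_Icc.2 hlt.le)).2⟩
  have hκ : 0 < δ / 2 := half_pos hδ
  have hRc := Icc_union_Icc_subset_lorDom hf.c_mem hκ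
  obtain ⟨L, hL, hdist⟩ := hf.exists_derivWithin_le_mul_exp (isCompact_Icc.union isCompact_Icc) hRc
  set ε := min (min (δ / 2) 1 * (q - p) / Real.exp (2 * L)) p
  have hε : 0 < ε := lt_min (div_pos (mul_pos (lt_min hκ one_pos) (sub_pos.2 hpq))
    (Real.exp_pos _)) hp
  have hgap : (p - (p - ε)) * Real.exp (2 * L) ≤ min (δ / 2) 1 * (q - p) := by
    rw [sub_sub_cancel, ← le_div_iff₀ (Real.exp_pos _)]
    exact min_le_left _ _
  refine ⟨ε, hε, hf.isHomterval_Ioo_of_forall_Icc_subset ((sub_lt_self p hε).trans hpq) fun n =>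
    (hf.Icc_iterate_subset_of_small_gap hκ (by linarith) hL hdist
      (by linarith [min_le_right (min (δ / 2) 1 * (q - p) / Real.exp (2 * L)) p])
      (sub_lt_self p hε) hpq hgap h01 (fun n => (himg n).2)
      (hf.sum_sub_iterate_le_one hpa hpq hT fun n => (himg n).1) n).trans hRc⟩

theorem pos_of_isHomterval (hf : IsContractingLorenz f c) {p q : ℝ} (hpq : p < q)
    (hT : IsHomterval f c (Ioo p q)) (hdisj : Disjoint (Ioo p q) (f '' Ioo p q)) : 0 < p := by
  refine (Icc_subset_Icc_of_Ioo_subset hpq hT.2.1 (left_mem_Icc.2 hpq.le)).1.lt_of_ne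
    fun hp => ?_
  subst hp
  have hqc : q ≤ c := not_lt.1 fun h => hT.2.2 0 c ⟨hf.c_mem.1, h⟩ rfl
  obtain ⟨q', hq'⟩ := exists_between hpq
  have hsub : Icc 0 q' ⊆ lorDom c := fun x hx =>
    ⟨⟨hx.1, by linarith [hx.2, hf.c_mem.2]⟩, (by linarith [hx.2] : x < c).ne⟩
  have hmono := hf.strictMonoOn_of_convex (convex_Icc _ _) hsub
  have himg := ContinuousOn.image_Ioo_of_strictMonoOn hq'.1.le
    (hf.smooth.continuousOn.mono hsub) hmono
  have hfq' : 0 < f q' :=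
    hf.map0 ▸ hmono (left_mem_Icc.2 hq'.1.le) (right_mem_Icc.2 hq'.1.le) hq'.1
  obtain ⟨y, hy⟩ := exists_between (lt_min hfq' hq'.1)
  refine disjoint_left.1 hdisj ⟨hy.1, (hy.2.trans_le (min_le_right _ _)).trans hq'.2⟩ ?_
  have hy' : y ∈ f '' Ioo 0 q' := by
    rw [himg, hf.map0]
    exact ⟨hy.1, hy.2.trans_le (min_le_left _ _)⟩
  exact image_mono (Ioo_subset_Ioo_right hq'.2.le) hy'

theorem not_disjoint_Ioo_crit_wanderingSet (hf : IsContractingLorenz f c)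
    (hpa : HasNoPeriodicAttractor f) (hne : (wanderingSet f c).Nonempty) {δ : ℝ} (hδ : 0 < δ) :
    ¬ Disjoint (Ioo (c - δ) (c + δ)) (wanderingSet f c) := by
  intro hW
  obtain ⟨x, hx⟩ := hne
  have hTW : connectedComponentIn (wanderingSet f c) x ⊆ wanderingSet f c :=
    connectedComponentIn_subset _ _
  obtain ⟨p, q, hpq, hTpq⟩ := isPreconnected_connectedComponentIn.ordConnected.eq_Ioo_of_isOpen
    isOpen_wanderingSet.connectedComponentIn ⟨x, mem_connectedComponentIn hx⟩
    ((Metric.isBounded_Icc (0 : ℝ) 1).subset (hTW.trans wanderingSet_subset_Icc))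
  have hxT : x ∈ Ioo p q := hTpq ▸ mem_connectedComponentIn hx
  rw [hTpq] at hTW
  have hT : IsHomterval f c (Ioo p q) := ⟨⟨p, q, hpq, rfl⟩, hTW.trans wanderingSet_subset_Icc,
    fun n y hy => iterate_ne_of_mem_wanderingSet (hTW hy) n⟩
  obtain ⟨ε, hε, hJ⟩ := hf.exists_isHomterval_Ioo_sub hpa hpq
    (hf.pos_of_isHomterval hpq hT (by
      simpa [onFun] using hf.pairwise_disjoint_image_iterate hpa hT zero_ne_one)) hT hδ fun n =>
    (hW.mono_right (hf.isHomterval_subset_wanderingSet hpa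
      (hf.isHomterval_image_iterate hT n))).symm
  have hJT := isPreconnected_Ioo.subset_connectedComponentIn ⟨by linarith [hxT.1], hxT.2⟩
    (hf.isHomterval_subset_wanderingSet hpa hJ)
  rw [hTpq] at hJT
  exact lt_irrefl p (hJT ⟨sub_lt_self p hε, hpq⟩).1

end IsContractingLorenz

theorem wandering_intervals_dense_general
    (f : ℝ → ℝ) (c : ℝ)
    (hf : IsContractingLorenz f c)
    (hpa : HasNoPeriodicAttractor f)
    (hex : ∃ I : Set ℝ, IsWanderingInterval f c I) :
    OpenDenseIn01 {x | ∃ I : Set ℝ, IsWanderingInterval f c I ∧ x ∈ I} := by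
  change OpenDenseIn01 (wanderingSet f c)
  refine ⟨⟨_, isOpen_wanderingSet, rfl⟩, ?_⟩
  rw [inter_eq_left.2 wanderingSet_subset_Icc]
  refine Icc_subset_closure_of_forall_Ioo zero_lt_one fun u v huv h01 => ?_
  rw [← not_disjoint_iff_nonempty_inter]
  intro hW
  obtain ⟨δ, hδ, hδW⟩ :=
    hf.exists_Ioo_crit_disjoint_wanderingSet hpa huv (h01.trans Ioo_subset_Icc_self) hW
  obtain ⟨I, hI⟩ := hex
  exact hf.not_disjoint_Ioo_crit_wanderingSet hpa
    (hI.isHomterval.nonempty.mono hI.subset_wanderingSet) hδ hδW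

/-- Denseness of wandering intervals, when they exist. -/
theorem wandering_intervals_dense
    (f : ℝ → ℝ) (c : ℝ)
    (hf : IsContractingLorenz f c) (hnf : IsNonFlat f c)
    (hpa : HasNoPeriodicAttractor f)
    (hex : ∃ I : Set ℝ, IsWanderingInterval f c I) :
    OpenDenseIn01 {x | ∃ I : Set ℝ, IsWanderingInterval f c I ∧ x ∈ I} :=
  wandering_intervals_dense_general f c hf hpa hex
end

section
/- Let f be a C² non-flat contracting Lorenz map without periodic attractors. If x∈[0,1] is such that c∈α_f(x), then Ω(f)⊂α_f(x), i.e. the α-limit set of x contains the whole non-wandering set of f. -/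
open Set Filter Topology

section AuxProofs
open Set Filter Topology

section helpers
variable {f : ℝ → ℝ} {c : ℝ}

/-- points of [0,1] whose orbit never hits c -/
def neverC (f : ℝ → ℝ) (c : ℝ) : Set ℝ := {t | t ∈ Icc (0:ℝ) 1 ∧ ∀ k : ℕ, f^[k] t ≠ c}

lemma neverC_subset_lorDom : neverC f c ⊆ lorDom c := by
  rintro t ⟨ht, h0⟩
  exact ⟨ht, by simpa using h0 0⟩

lemma neverC_subset_Icc : neverC f c ⊆ Icc (0:ℝ) 1 := fun t ht => ht.1

lemma mapsTo_neverC (hf : IsContractingLorenz f c) :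
    MapsTo f (neverC f c) (neverC f c) := by
  rintro t ⟨ht, hk⟩
  refine ⟨hf.maps ⟨ht, by simpa using hk 0⟩, fun k => ?_⟩
  have := hk (k+1)
  rwa [Function.iterate_succ_apply] at this

lemma mapsTo_iter_neverC (hf : IsContractingLorenz f c) (k : ℕ) :
    MapsTo f^[k] (neverC f c) (neverC f c) := by
  induction k with
  | zero => simp [MapsTo]
  | succ k ih =>
    intro t ht
    rw [Function.iterate_succ_apply']
    exact mapsTo_neverC hf (ih ht)

lemma continuousOn_lorDom (hf : IsContractingLorenz f c) : ContinuousOn f (lorDom c) :=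
  hf.smooth.continuousOn

lemma continuousOn_iter_neverC (hf : IsContractingLorenz f c) (k : ℕ) :
    ContinuousOn f^[k] (neverC f c) := by
  induction k with
  | zero => simpa using continuousOn_id
  | succ k ih =>
    have : f^[k+1] = f ∘ f^[k] := Function.iterate_succ' f k
    rw [this]
    exact (continuousOn_lorDom hf).comp ih
      (fun t ht => neverC_subset_lorDom (mapsTo_iter_neverC hf k ht))

lemma interior_lorDom : interior (lorDom c) = Ioo (0:ℝ) 1 \ {c} := by
  have : lorDom c = Icc (0:ℝ) 1 ∩ ({c}ᶜ) := rfl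
  rw [this, diff_eq, interior_inter, interior_Icc, interior_compl]
  simp

/-- f is strictly monotone on any convex subset of the domain. -/
lemma strictMonoOn_of_subset (hf : IsContractingLorenz f c) (A : Set ℝ)
    (hA : A ⊆ lorDom c) (hconv : Convex ℝ A) : StrictMonoOn f A := by
  refine strictMonoOn_of_deriv_pos hconv ((continuousOn_lorDom hf).mono hA) ?_
  intro x hx
  have hxl : x ∈ interior (lorDom c) := interior_mono hA hx
  have hnd : lorDom c ∈ 𝓝 x := mem_interior_iff_mem_nhds.mp hxl
  rw [← derivWithin_of_mem_nhds hnd]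
  exact hf.deriv_pos x (interior_subset hxl)

lemma iter_strictMono (hf : IsContractingLorenz f c) (A : Set ℝ)
    (hA : A ⊆ neverC f c) (hconv : Convex ℝ A) (k : ℕ) :
    StrictMonoOn f^[k] A ∧ f^[k] '' A ⊆ neverC f c ∧ Convex ℝ (f^[k] '' A) := by
  induction k with
  | zero => simpa using ⟨strictMonoOn_id, hA, hconv⟩
  | succ k ih =>
    obtain ⟨hm, him, hconv'⟩ := ih
    have hstep : f^[k+1] = f ∘ f^[k] := Function.iterate_succ' f k
    have hsm : StrictMonoOn f (f^[k] '' A) :=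
      strictMonoOn_of_subset hf _ (him.trans neverC_subset_lorDom) hconv'
    have hmono : StrictMonoOn f^[k+1] A := by
      rw [hstep]; exact hsm.comp hm (mapsTo_image _ _)
    have him' : f^[k+1] '' A ⊆ neverC f c := by
      rw [hstep, image_comp]
      exact fun t ⟨s, hs, hst⟩ => hst ▸ mapsTo_neverC hf (him hs)
    have hco : Convex ℝ (f^[k+1] '' A) := by
      rw [hstep, image_comp]
      have : IsPreconnected (f '' (f^[k] '' A)) :=
        (hconv'.isPreconnected).image f
          ((continuousOn_lorDom hf).mono (him.trans neverC_subset_lorDom))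
      exact this.ordConnected.convex
    exact ⟨hmono, him', hco⟩
end helpers

/-- sign is constant on a fixed-point-free interval -/
lemma sign_const {φ : ℝ → ℝ} {u v : ℝ} (hcont : ContinuousOn φ (Ioo u v))
    (hne : ∀ s ∈ Ioo u v, φ s ≠ 0) {s t : ℝ} (hs : s ∈ Ioo u v) (ht : t ∈ Ioo u v)
    (hφs : 0 < φ s) : 0 < φ t := by
  by_contra hneg
  have hφt : φ t < 0 := lt_of_le_of_ne (not_lt.mp hneg) (hne t ht)
  rcases le_total s t with h | h
  · have hsub : Icc s t ⊆ Ioo u v := ordConnected_Ioo.out hs ht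
    have := intermediate_value_Icc' h (hcont.mono hsub)
    have h0 : (0:ℝ) ∈ Icc (φ t) (φ s) := ⟨hφt.le, hφs.le⟩
    obtain ⟨r, hr, hr0⟩ := this h0
    exact hne r (hsub hr) hr0
  · have hsub : Icc t s ⊆ Ioo u v := ordConnected_Ioo.out ht hs
    have := intermediate_value_Icc h (hcont.mono hsub)
    have h0 : (0:ℝ) ∈ Icc (φ t) (φ s) := ⟨hφt.le, hφs.le⟩
    obtain ⟨r, hr, hr0⟩ := this h0
    exact hne r (hsub hr) hr0

/-- Core: monotone increasing self-map, fixed-point-free interval where g > id: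
orbits of a middle subinterval all converge increasingly to a common limit `p`. -/
lemma orbit_converge_inc {A : Set ℝ} (hA : A ⊆ Icc (0:ℝ) 1) (hconv : Convex ℝ A)
    {g : ℝ → ℝ} (hmaps : MapsTo g A A) (hcont : ContinuousOn g A)
    (hmono : StrictMonoOn g A) {u v : ℝ} (huv : u < v) (hsub : Ioo u v ⊆ A)
    (hfree : ∀ s ∈ Ioo u v, g s ≠ s) (hpos : ∀ s ∈ Ioo u v, s < g s) :
    ∃ u₁ v₁ p : ℝ, u < u₁ ∧ u₁ < v₁ ∧ v₁ < v ∧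
      ∀ t ∈ Ioo u₁ v₁, (∀ k, g^[k] t ∈ A) ∧ (∀ k, g^[k] t < g^[k+1] t) ∧
        (∀ k, g^[k] t < p) ∧ Tendsto (fun k => g^[k] t) atTop (𝓝 p) := by
  set u₁ := (2*u+v)/3 with hu₁
  set v₁ := (u+2*v)/3 with hv₁
  set t₀ := (u+v)/2 with ht₀
  have hu₁u : u < u₁ := by rw [hu₁]; linarith
  have hu₁v₁ : u₁ < v₁ := by rw [hu₁, hv₁]; linarith
  have hv₁v : v₁ < v := by rw [hv₁]; linarith
  have ht₀mem : t₀ ∈ Ioo u v := ⟨by rw [ht₀]; linarith, by rw [ht₀]; linarith⟩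
  have ht₀v₁ : t₀ < v₁ := by rw [ht₀, hv₁]; linarith
  have hv₁mem : v₁ ∈ Ioo u v := ⟨by linarith [hu₁u, hu₁v₁], hv₁v⟩
  have hv₁A : v₁ ∈ A := hsub hv₁mem
  have hAne : A.Nonempty := ⟨v₁, hv₁A⟩
  have hAbdd : BddAbove A := ⟨1, fun s hs => (hA hs).2⟩
  -- the set of fixed points above v₁
  set P := {q | q ∈ A ∧ v₁ ≤ q ∧ g q = q} with hP
  -- key: no fixed points in [t₀, s] for s below any fixed point ≥ v₁
  have hkey : ∀ s ∈ A, t₀ ≤ s → (∀ q ∈ A, t₀ ≤ q → q ≤ s → g q ≠ q) → s < g s := by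
    intro s hsA hts hnofix
    have hIccA : Icc t₀ s ⊆ A := hconv.ordConnected.out (hsub ht₀mem) hsA
    have hgs : g s ≠ s := hnofix s hsA hts le_rfl
    rcases lt_or_gt_of_ne hgs with hlt | hgt
    · exfalso
      have hcont' : ContinuousOn (fun r => g r - r) (Icc t₀ s) :=
        ((hcont.mono hIccA).sub continuousOn_id)
      have := intermediate_value_Icc' hts hcont'
      have h0 : (0:ℝ) ∈ Icc (g s - s) (g t₀ - t₀) :=
        ⟨by linarith, by linarith [hpos t₀ ht₀mem]⟩
      obtain ⟨r, hr, hr0⟩ := this h0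
      exact hnofix r (hIccA hr) hr.1 hr.2 (by linarith [sub_eq_zero.mp hr0])
    · exact hgt
  by_cases hPne : P.Nonempty
  · -- p = least fixed point above v₁
    set p := sInf P with hpdef
    have hPbdd : BddBelow P := ⟨v₁, fun q hq => hq.2.1⟩
    have hv₁p : v₁ ≤ p := le_csInf hPne (fun q hq => hq.2.1)
    obtain ⟨q₀, hq₀⟩ := id hPne
    have hpq₀ : p ≤ q₀ := csInf_le hPbdd hq₀
    have hpA : p ∈ A := hconv.ordConnected.out hv₁A hq₀.1 ⟨hv₁p, hpq₀⟩
    have hgp : g p = p := by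
      by_contra hne
      have hδ : 0 < |g p - p| := abs_pos.mpr (sub_ne_zero.mpr hne)
      set δ := |g p - p| with hδdef
      obtain ⟨θ, hθpos, hθ⟩ := Metric.continuousWithinAt_iff.mp (hcont p hpA) (δ/4)
        (by linarith)
      have hlt : sInf P < p + min θ (δ/4) := by
        have : (0:ℝ) < min θ (δ/4) := lt_min hθpos (by linarith)
        linarith [le_refl p]
      obtain ⟨q, hqP, hqlt⟩ := (csInf_lt_iff hPbdd hPne).mp hlt
      have hqge : p ≤ q := csInf_le hPbdd hqP
      have hdist : dist q p < θ := by
        rw [Real.dist_eq, abs_of_nonneg (by linarith)]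
        exact lt_of_lt_of_le (by linarith) (min_le_left _ _)
      have hthis := hθ hqP.1 hdist
      rw [hqP.2.2, Real.dist_eq] at hthis
      have hqp : |q - p| < δ/4 := by
        rw [abs_of_nonneg (by linarith)]
        have h1 : q - p < min θ (δ/4) := by linarith
        exact lt_of_lt_of_le h1 (min_le_right _ _)
      have : |g p - p| < δ/2 := by
        calc |g p - p| = |(g p - q) + (q - p)| := by ring_nf
          _ ≤ |g p - q| + |q - p| := abs_add_le _ _
          _ < δ/4 + δ/4 := by
              rw [abs_sub_comm (g p) q]
              exact add_lt_add hthis hqp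
          _ = δ/2 := by ring
      rw [← hδdef] at this
      linarith
    have hnofixlow : ∀ s, s < p → ∀ q ∈ A, t₀ ≤ q → q ≤ s → g q ≠ q := by
      intro s hs q hqA htq hqs hgq
      rcases lt_or_ge q v₁ with h | h
      · exact hfree q ⟨lt_of_lt_of_le (by linarith [ht₀mem.1]) htq, lt_trans h hv₁v⟩ hgq
      · have : q ∈ P := ⟨hqA, h, hgq⟩
        have := csInf_le hPbdd this
        linarith
    -- orbit analysis
    refine ⟨u₁, v₁, p, hu₁u, hu₁v₁, hv₁v, ?_⟩
    intro t ht
    have htuv : t ∈ Ioo u v := ⟨lt_trans hu₁u ht.1, lt_trans ht.2 hv₁v⟩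
    have htp : t < p := lt_of_lt_of_le ht.2 hv₁p
    have hgrow : ∀ s ∈ A, u < s → s < p → s < g s := by
      intro s hsA hus hsp
      rcases lt_or_ge s v with h | h
      · exact hpos s ⟨hus, h⟩
      · exact hkey s hsA (by linarith [ht₀mem.2]) (hnofixlow s hsp)
    have horb : ∀ k, g^[k] t ∈ A ∧ u < g^[k] t ∧ g^[k] t < p := by
      intro k
      induction k with
      | zero => exact ⟨hsub htuv, htuv.1, htp⟩
      | succ k ih =>
        obtain ⟨hA', hu', hp'⟩ := ih
        rw [Function.iterate_succ_apply']
        refine ⟨hmaps hA', lt_trans hu' (hgrow _ hA' hu' hp'), ?_⟩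
        have hlt := hmono hA' hpA hp'
        rwa [hgp] at hlt
    have hinc : ∀ k, g^[k] t < g^[k+1] t := by
      intro k
      obtain ⟨hA', hu', hp'⟩ := horb k
      rw [Function.iterate_succ_apply']
      exact hgrow _ hA' hu' hp'
    have hmonoseq : Monotone (fun k => g^[k] t) :=
      monotone_nat_of_le_succ (fun k => (hinc k).le)
    have hbddseq : BddAbove (range fun k => g^[k] t) :=
      ⟨1, by rintro _ ⟨k, rfl⟩; exact (hA (horb k).1).2⟩
    have htendsto : Tendsto (fun k => g^[k] t) atTop (𝓝 (⨆ k, g^[k] t)) :=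
      tendsto_atTop_ciSup hmonoseq hbddseq
    set q := ⨆ k, g^[k] t with hqdef
    have hqlep : q ≤ p := ciSup_le (fun k => (horb k).2.2.le)
    have htq : t ≤ q := le_ciSup hbddseq 0
    have hqp : q = p := by
      by_contra hne
      have hqltp : q < p := lt_of_le_of_ne hqlep hne
      have hqA : q ∈ A := hconv.ordConnected.out (hsub htuv) hpA ⟨htq, hqlep⟩
      have hgqq : g q = q := by
        have hseqin : Tendsto (fun k => g^[k] t) atTop (𝓝[A] q) :=
          tendsto_nhdsWithin_iff.mpr ⟨htendsto, Eventually.of_forall (fun k => (horb k).1)⟩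
        have h1 : Tendsto (fun k => g (g^[k] t)) atTop (𝓝 (g q)) :=
          ((hcont q hqA).tendsto).comp hseqin
        have h2 : Tendsto (fun k => g (g^[k] t)) atTop (𝓝 q) := by
          have : (fun k => g (g^[k] t)) = (fun k => g^[k+1] t) := by
            funext k; rw [Function.iterate_succ_apply']
          rw [this]
          exact htendsto.comp (tendsto_add_atTop_nat 1)
        exact tendsto_nhds_unique h1 h2
      have huq : u < q := lt_of_lt_of_le htuv.1 htq
      exact hnofixlow q hqltp q hqA (by
        rcases lt_or_ge q v₁ with h | h
        · exfalso
          exact hfree q ⟨huq, lt_trans h hv₁v⟩ hgqq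
        · linarith [ht₀v₁]) le_rfl hgqq
    rw [hqp] at htendsto
    exact ⟨fun k => (horb k).1, hinc, fun k => (horb k).2.2, htendsto⟩
  · -- no fixed point above v₁ : p = sSup A
    set p := sSup A with hpdef
    have hv₁p : v₁ ≤ p := le_csSup hAbdd hv₁A
    have hpnotA : ∀ s ∈ A, s < p := by
      intro s hsA
      rcases lt_or_eq_of_le (le_csSup hAbdd hsA) with h | h
      · exact h
      · exfalso
        -- s = p = sSup A ∈ A; then g s > s but g s ≤ sSup A
        rcases lt_or_ge s v₁ with hsv | hsv
        · -- then sSup A = s < v₁ ≤ sSup A, contradiction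
          have := le_csSup hAbdd hv₁A
          rw [← h] at this; linarith
        · have hnofix : ∀ q ∈ A, t₀ ≤ q → q ≤ s → g q ≠ q := by
            intro q hqA htq hqs hgq
            rcases lt_or_ge q v₁ with h' | h'
            · exact hfree q ⟨lt_of_lt_of_le (by linarith [ht₀mem.1]) htq, lt_trans h' hv₁v⟩ hgq
            · exact hPne ⟨q, hqA, h', hgq⟩
          have hgt := hkey s hsA (by linarith [ht₀v₁]) hnofix
          have := le_csSup hAbdd (hmaps hsA)
          rw [← h] at this; linarith
    refine ⟨u₁, v₁, p, hu₁u, hu₁v₁, hv₁v, ?_⟩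
    intro t ht
    have htuv : t ∈ Ioo u v := ⟨lt_trans hu₁u ht.1, lt_trans ht.2 hv₁v⟩
    have hgrow : ∀ s ∈ A, u < s → s < g s := by
      intro s hsA hus
      rcases lt_or_ge s v with h | h
      · exact hpos s ⟨hus, h⟩
      · refine hkey s hsA (by linarith [ht₀mem.2]) ?_
        intro q hqA htq hqs hgq
        rcases lt_or_ge q v₁ with h' | h'
        · exact hfree q ⟨lt_of_lt_of_le (by linarith [ht₀mem.1]) htq, lt_trans h' hv₁v⟩ hgq
        · exact hPne ⟨q, hqA, h', hgq⟩
    have horb : ∀ k, g^[k] t ∈ A ∧ u < g^[k] t := by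
      intro k
      induction k with
      | zero => exact ⟨hsub htuv, htuv.1⟩
      | succ k ih =>
        rw [Function.iterate_succ_apply']
        exact ⟨hmaps ih.1, lt_trans ih.2 (hgrow _ ih.1 ih.2)⟩
    have hinc : ∀ k, g^[k] t < g^[k+1] t := by
      intro k
      rw [Function.iterate_succ_apply']
      exact hgrow _ (horb k).1 (horb k).2
    have hmonoseq : Monotone (fun k => g^[k] t) :=
      monotone_nat_of_le_succ (fun k => (hinc k).le)
    have hbddseq : BddAbove (range fun k => g^[k] t) :=
      ⟨1, by rintro _ ⟨k, rfl⟩; exact (hA (horb k).1).2⟩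
    have htendsto : Tendsto (fun k => g^[k] t) atTop (𝓝 (⨆ k, g^[k] t)) :=
      tendsto_atTop_ciSup hmonoseq hbddseq
    set q := ⨆ k, g^[k] t with hqdef
    have hqlep : q ≤ p := ciSup_le (fun k => (le_csSup hAbdd (horb k).1))
    have htq : t ≤ q := le_ciSup hbddseq 0
    have hqp : q = p := by
      by_contra hne
      have hqltp : q < p := lt_of_le_of_ne hqlep hne
      obtain ⟨r, hrA, hqr⟩ := exists_lt_of_lt_csSup hAne hqltp
      have hqA : q ∈ A := hconv.ordConnected.out (hsub htuv) hrA ⟨htq, hqr.le⟩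
      have hgqq : g q = q := by
        have hseqin : Tendsto (fun k => g^[k] t) atTop (𝓝[A] q) :=
          tendsto_nhdsWithin_iff.mpr ⟨htendsto, Eventually.of_forall (fun k => (horb k).1)⟩
        have h1 : Tendsto (fun k => g (g^[k] t)) atTop (𝓝 (g q)) :=
          ((hcont q hqA).tendsto).comp hseqin
        have h2 : Tendsto (fun k => g (g^[k] t)) atTop (𝓝 q) := by
          have : (fun k => g (g^[k] t)) = (fun k => g^[k+1] t) := by
            funext k; rw [Function.iterate_succ_apply']
          rw [this]
          exact htendsto.comp (tendsto_add_atTop_nat 1)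
        exact tendsto_nhds_unique h1 h2
      have huq : u < q := lt_of_lt_of_le htuv.1 htq
      rcases lt_or_ge q v₁ with h' | h'
      · exact hfree q ⟨huq, lt_trans h' hv₁v⟩ hgqq
      · exact hPne ⟨q, hqA, h', hgqq⟩
    rw [hqp] at htendsto
    exact ⟨fun k => (horb k).1, hinc, fun k => hpnotA _ (horb k).1, htendsto⟩

lemma orbit_converge_dec {A : Set ℝ} (hA : A ⊆ Icc (0:ℝ) 1) (hconv : Convex ℝ A)
    {g : ℝ → ℝ} (hmaps : MapsTo g A A) (hcont : ContinuousOn g A)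
    (hmono : StrictMonoOn g A) {u v : ℝ} (huv : u < v) (hsub : Ioo u v ⊆ A)
    (hfree : ∀ s ∈ Ioo u v, g s ≠ s) (hneg : ∀ s ∈ Ioo u v, g s < s) :
    ∃ u₁ v₁ p : ℝ, u < u₁ ∧ u₁ < v₁ ∧ v₁ < v ∧
      ∀ t ∈ Ioo u₁ v₁, (∀ k, g^[k] t ∈ A) ∧ (∀ k, g^[k+1] t < g^[k] t) ∧
        (∀ k, p < g^[k] t) ∧ Tendsto (fun k => g^[k] t) atTop (𝓝 p) := by
  set u₁ := (2*u+v)/3 with hu₁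
  set v₁ := (u+2*v)/3 with hv₁
  set t₀ := (u+v)/2 with ht₀
  have hu₁u : u < u₁ := by rw [hu₁]; linarith
  have hu₁v₁ : u₁ < v₁ := by rw [hu₁, hv₁]; linarith
  have hv₁v : v₁ < v := by rw [hv₁]; linarith
  have ht₀mem : t₀ ∈ Ioo u v := ⟨by rw [ht₀]; linarith, by rw [ht₀]; linarith⟩
  have hu₁t₀ : u₁ < t₀ := by rw [ht₀, hu₁]; linarith
  have hu₁mem : u₁ ∈ Ioo u v := ⟨hu₁u, by linarith [hu₁v₁, hv₁v]⟩
  have hu₁A : u₁ ∈ A := hsub hu₁mem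
  have hAne : A.Nonempty := ⟨u₁, hu₁A⟩
  have hAbdd : BddBelow A := ⟨0, fun s hs => (hA hs).1⟩
  set P := {q | q ∈ A ∧ q ≤ u₁ ∧ g q = q} with hP
  have hkey : ∀ s ∈ A, s ≤ t₀ → (∀ q ∈ A, s ≤ q → q ≤ t₀ → g q ≠ q) → g s < s := by
    intro s hsA hts hnofix
    have hIccA : Icc s t₀ ⊆ A := hconv.ordConnected.out hsA (hsub ht₀mem)
    have hgs : g s ≠ s := hnofix s hsA le_rfl hts
    rcases lt_or_gt_of_ne hgs with hlt | hgt
    · exact hlt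
    · exfalso
      have hcont' : ContinuousOn (fun r => g r - r) (Icc s t₀) :=
        ((hcont.mono hIccA).sub continuousOn_id)
      have := intermediate_value_Icc' hts hcont'
      have h0 : (0:ℝ) ∈ Icc (g t₀ - t₀) (g s - s) :=
        ⟨by linarith [hneg t₀ ht₀mem], by linarith⟩
      obtain ⟨r, hr, hr0⟩ := this h0
      exact hnofix r (hIccA hr) hr.1 hr.2 (by linarith [sub_eq_zero.mp hr0])
  by_cases hPne : P.Nonempty
  · set p := sSup P with hpdef
    have hPbdd : BddAbove P := ⟨u₁, fun q hq => hq.2.1⟩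
    have hpu₁ : p ≤ u₁ := csSup_le hPne (fun q hq => hq.2.1)
    obtain ⟨q₀, hq₀⟩ := id hPne
    have hpq₀ : q₀ ≤ p := le_csSup hPbdd hq₀
    have hpA : p ∈ A := hconv.ordConnected.out hq₀.1 hu₁A ⟨hpq₀, hpu₁⟩
    have hgp : g p = p := by
      by_contra hne
      have hδ : 0 < |g p - p| := abs_pos.mpr (sub_ne_zero.mpr hne)
      set δ := |g p - p| with hδdef
      obtain ⟨θ, hθpos, hθ⟩ := Metric.continuousWithinAt_iff.mp (hcont p hpA) (δ/4)
        (by linarith)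
      have hlt : p - min θ (δ/4) < sSup P := by
        have : (0:ℝ) < min θ (δ/4) := lt_min hθpos (by linarith)
        linarith [le_refl p]
      obtain ⟨q, hqP, hqlt⟩ := (lt_csSup_iff hPbdd hPne).mp hlt
      have hqge : q ≤ p := le_csSup hPbdd hqP
      have hdist : dist q p < θ := by
        rw [Real.dist_eq, abs_of_nonpos (by linarith)]
        have h1 : p - q < min θ (δ/4) := by linarith
        exact lt_of_lt_of_le (by linarith) (min_le_left _ _)
      have hthis := hθ hqP.1 hdist
      rw [hqP.2.2, Real.dist_eq] at hthis
      have hqp : |q - p| < δ/4 := by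
        rw [abs_of_nonpos (by linarith)]
        have h1 : p - q < min θ (δ/4) := by linarith
        exact lt_of_lt_of_le (by linarith) (min_le_right _ _)
      have : |g p - p| < δ/2 := by
        calc |g p - p| = |(g p - q) + (q - p)| := by ring_nf
          _ ≤ |g p - q| + |q - p| := abs_add_le _ _
          _ < δ/4 + δ/4 := by
              rw [abs_sub_comm (g p) q]
              exact add_lt_add hthis hqp
          _ = δ/2 := by ring
      rw [← hδdef] at this
      linarith
    have hnofixhigh : ∀ s, p < s → ∀ q ∈ A, s ≤ q → q ≤ t₀ → g q ≠ q := by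
      intro s hs q hqA htq hqs hgq
      rcases lt_or_ge u₁ q with h | h
      · exact hfree q ⟨lt_trans hu₁u h, lt_of_le_of_lt hqs (by linarith [ht₀mem.2])⟩ hgq
      · have : q ∈ P := ⟨hqA, h, hgq⟩
        have := le_csSup hPbdd this
        linarith
    refine ⟨u₁, v₁, p, hu₁u, hu₁v₁, hv₁v, ?_⟩
    intro t ht
    have htuv : t ∈ Ioo u v := ⟨lt_trans hu₁u ht.1, lt_trans ht.2 hv₁v⟩
    have htp : p < t := lt_of_le_of_lt hpu₁ ht.1
    have hgrow : ∀ s ∈ A, s < v → p < s → g s < s := by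
      intro s hsA hsv hps
      rcases lt_or_ge u s with h | h
      · exact hneg s ⟨h, hsv⟩
      · exact hkey s hsA (by linarith [ht₀mem.1]) (hnofixhigh s hps)
    have horb : ∀ k, g^[k] t ∈ A ∧ g^[k] t < v ∧ p < g^[k] t := by
      intro k
      induction k with
      | zero => exact ⟨hsub htuv, htuv.2, htp⟩
      | succ k ih =>
        obtain ⟨hA', hv', hp'⟩ := ih
        rw [Function.iterate_succ_apply']
        refine ⟨hmaps hA', lt_trans (hgrow _ hA' hv' hp') hv', ?_⟩
        have hlt := hmono hpA hA' hp'
        rwa [hgp] at hlt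
    have hinc : ∀ k, g^[k+1] t < g^[k] t := by
      intro k
      obtain ⟨hA', hv', hp'⟩ := horb k
      rw [Function.iterate_succ_apply']
      exact hgrow _ hA' hv' hp'
    have hmonoseq : Antitone (fun k => g^[k] t) :=
      antitone_nat_of_succ_le (fun k => (hinc k).le)
    have hbddseq : BddBelow (range fun k => g^[k] t) :=
      ⟨0, by rintro _ ⟨k, rfl⟩; exact (hA (horb k).1).1⟩
    have htendsto : Tendsto (fun k => g^[k] t) atTop (𝓝 (⨅ k, g^[k] t)) :=
      tendsto_atTop_ciInf hmonoseq hbddseq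
    set q := ⨅ k, g^[k] t with hqdef
    have hqlep : p ≤ q := le_ciInf (fun k => (horb k).2.2.le)
    have htq : q ≤ t := ciInf_le hbddseq 0
    have hqp : q = p := by
      by_contra hne
      have hqltp : p < q := lt_of_le_of_ne hqlep (Ne.symm hne)
      have hqA : q ∈ A := hconv.ordConnected.out hpA (hsub htuv) ⟨hqlep, htq⟩
      have hgqq : g q = q := by
        have hseqin : Tendsto (fun k => g^[k] t) atTop (𝓝[A] q) :=
          tendsto_nhdsWithin_iff.mpr ⟨htendsto, Eventually.of_forall (fun k => (horb k).1)⟩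
        have h1 : Tendsto (fun k => g (g^[k] t)) atTop (𝓝 (g q)) :=
          ((hcont q hqA).tendsto).comp hseqin
        have h2 : Tendsto (fun k => g (g^[k] t)) atTop (𝓝 q) := by
          have : (fun k => g (g^[k] t)) = (fun k => g^[k+1] t) := by
            funext k; rw [Function.iterate_succ_apply']
          rw [this]
          exact htendsto.comp (tendsto_add_atTop_nat 1)
        exact tendsto_nhds_unique h1 h2
      have hqv : q < v := lt_of_le_of_lt htq htuv.2
      exact hnofixhigh q hqltp q hqA le_rfl (by
        rcases lt_or_ge u₁ q with h | h
        · exfalso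
          exact hfree q ⟨lt_trans hu₁u h, hqv⟩ hgqq
        · linarith [hu₁t₀]) hgqq
    rw [hqp] at htendsto
    exact ⟨fun k => (horb k).1, hinc, fun k => (horb k).2.2, htendsto⟩
  · set p := sInf A with hpdef
    have hpu₁ : p ≤ u₁ := csInf_le hAbdd hu₁A
    have hpnotA : ∀ s ∈ A, p < s := by
      intro s hsA
      rcases lt_or_eq_of_le (csInf_le hAbdd hsA) with h | h
      · exact h
      · exfalso
        rcases lt_or_ge u₁ s with hsv | hsv
        · have := csInf_le hAbdd hu₁A
          rw [h] at this; linarith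
        · have hnofix : ∀ q ∈ A, s ≤ q → q ≤ t₀ → g q ≠ q := by
            intro q hqA htq hqs hgq
            rcases lt_or_ge u₁ q with h' | h'
            · exact hfree q ⟨lt_trans hu₁u h', lt_of_le_of_lt hqs (by linarith [ht₀mem.2])⟩ hgq
            · exact hPne ⟨q, hqA, h', hgq⟩
          have hgt := hkey s hsA (by linarith [hu₁t₀]) hnofix
          have := csInf_le hAbdd (hmaps hsA)
          rw [h] at this; linarith
    refine ⟨u₁, v₁, p, hu₁u, hu₁v₁, hv₁v, ?_⟩
    intro t ht
    have htuv : t ∈ Ioo u v := ⟨lt_trans hu₁u ht.1, lt_trans ht.2 hv₁v⟩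
    have hgrow : ∀ s ∈ A, s < v → g s < s := by
      intro s hsA hsv
      rcases lt_or_ge u s with h | h
      · exact hneg s ⟨h, hsv⟩
      · refine hkey s hsA (by linarith [ht₀mem.1]) ?_
        intro q hqA htq hqs hgq
        rcases lt_or_ge u₁ q with h' | h'
        · exact hfree q ⟨lt_trans hu₁u h', lt_of_le_of_lt hqs (by linarith [ht₀mem.2])⟩ hgq
        · exact hPne ⟨q, hqA, h', hgq⟩
    have horb : ∀ k, g^[k] t ∈ A ∧ g^[k] t < v := by
      intro k
      induction k with
      | zero => exact ⟨hsub htuv, htuv.2⟩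
      | succ k ih =>
        rw [Function.iterate_succ_apply']
        exact ⟨hmaps ih.1, lt_trans (hgrow _ ih.1 ih.2) ih.2⟩
    have hinc : ∀ k, g^[k+1] t < g^[k] t := by
      intro k
      rw [Function.iterate_succ_apply']
      exact hgrow _ (horb k).1 (horb k).2
    have hmonoseq : Antitone (fun k => g^[k] t) :=
      antitone_nat_of_succ_le (fun k => (hinc k).le)
    have hbddseq : BddBelow (range fun k => g^[k] t) :=
      ⟨0, by rintro _ ⟨k, rfl⟩; exact (hA (horb k).1).1⟩
    have htendsto : Tendsto (fun k => g^[k] t) atTop (𝓝 (⨅ k, g^[k] t)) :=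
      tendsto_atTop_ciInf hmonoseq hbddseq
    set q := ⨅ k, g^[k] t with hqdef
    have hqlep : p ≤ q := le_ciInf (fun k => (csInf_le hAbdd (horb k).1))
    have htq : q ≤ t := ciInf_le hbddseq 0
    have hqp : q = p := by
      by_contra hne
      have hqltp : p < q := lt_of_le_of_ne hqlep (Ne.symm hne)
      obtain ⟨r, hrA, hqr⟩ := exists_lt_of_csInf_lt hAne hqltp
      have hqA : q ∈ A := hconv.ordConnected.out hrA (hsub htuv) ⟨hqr.le, htq⟩
      have hgqq : g q = q := by
        have hseqin : Tendsto (fun k => g^[k] t) atTop (𝓝[A] q) :=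
          tendsto_nhdsWithin_iff.mpr ⟨htendsto, Eventually.of_forall (fun k => (horb k).1)⟩
        have h1 : Tendsto (fun k => g (g^[k] t)) atTop (𝓝 (g q)) :=
          ((hcont q hqA).tendsto).comp hseqin
        have h2 : Tendsto (fun k => g (g^[k] t)) atTop (𝓝 q) := by
          have : (fun k => g (g^[k] t)) = (fun k => g^[k+1] t) := by
            funext k; rw [Function.iterate_succ_apply']
          rw [this]
          exact htendsto.comp (tendsto_add_atTop_nat 1)
        exact tendsto_nhds_unique h1 h2
      have hqv : q < v := lt_of_le_of_lt htq htuv.2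
      rcases lt_or_ge u₁ q with h' | h'
      · exact hfree q ⟨lt_trans hu₁u h', hqv⟩ hgqq
      · exact hPne ⟨q, hqA, h', hgqq⟩
    rw [hqp] at htendsto
    exact ⟨fun k => (horb k).1, hinc, fun k => hpnotA _ (horb k).1, htendsto⟩


open Set Filter Topology

section transfer
/-- limits of a monotone function along two increasing sequences approaching `p` from
below agree. -/
lemma tendsto_transfer_inc {h : ℝ → ℝ} {A : Set ℝ} (hm : MonotoneOn h A)
    (hbdd : ∀ s ∈ A, h s ∈ Icc (0:ℝ) 1) {p : ℝ} {a b : ℕ → ℝ}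
    (haA : ∀ k, a k ∈ A) (hbA : ∀ k, b k ∈ A)
    (hamono : Monotone a) (hbmono : Monotone b)
    (hap : ∀ k, a k < p) (hbp : ∀ k, b k < p)
    (hta : Tendsto a atTop (𝓝 p)) (htb : Tendsto b atTop (𝓝 p)) :
    Tendsto (fun k => h (b k)) atTop (𝓝 (⨆ k, h (a k))) := by
  have hham : Monotone (fun k => h (a k)) :=
    fun i j hij => hm (haA i) (haA j) (hamono hij)
  have hhbm : Monotone (fun k => h (b k)) :=
    fun i j hij => hm (hbA i) (hbA j) (hbmono hij)
  have hbda : BddAbove (range fun k => h (a k)) :=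
    ⟨1, by rintro _ ⟨k, rfl⟩; exact (hbdd _ (haA k)).2⟩
  have hbdb : BddAbove (range fun k => h (b k)) :=
    ⟨1, by rintro _ ⟨k, rfl⟩; exact (hbdd _ (hbA k)).2⟩
  have htb' : Tendsto (fun k => h (b k)) atTop (𝓝 (⨆ k, h (b k))) :=
    tendsto_atTop_ciSup hhbm hbdb
  have heq : (⨆ k, h (a k)) = (⨆ k, h (b k)) := by
    apply le_antisymm
    · refine ciSup_le (fun k => ?_)
      obtain ⟨j, hj⟩ := (htb.eventually (eventually_gt_nhds (hap k))).exists
      exact le_trans (hm (haA k) (hbA j) hj.le) (le_ciSup hbdb j)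
    · refine ciSup_le (fun k => ?_)
      obtain ⟨j, hj⟩ := (hta.eventually (eventually_gt_nhds (hbp k))).exists
      exact le_trans (hm (hbA k) (haA j) hj.le) (le_ciSup hbda j)
  rw [heq]
  exact htb'

lemma tendsto_transfer_dec {h : ℝ → ℝ} {A : Set ℝ} (hm : MonotoneOn h A)
    (hbdd : ∀ s ∈ A, h s ∈ Icc (0:ℝ) 1) {p : ℝ} {a b : ℕ → ℝ}
    (haA : ∀ k, a k ∈ A) (hbA : ∀ k, b k ∈ A)
    (hamono : Antitone a) (hbmono : Antitone b)
    (hap : ∀ k, p < a k) (hbp : ∀ k, p < b k)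
    (hta : Tendsto a atTop (𝓝 p)) (htb : Tendsto b atTop (𝓝 p)) :
    Tendsto (fun k => h (b k)) atTop (𝓝 (⨅ k, h (a k))) := by
  have hham : Antitone (fun k => h (a k)) :=
    fun i j hij => hm (haA j) (haA i) (hamono hij)
  have hhbm : Antitone (fun k => h (b k)) :=
    fun i j hij => hm (hbA j) (hbA i) (hbmono hij)
  have hbda : BddBelow (range fun k => h (a k)) :=
    ⟨0, by rintro _ ⟨k, rfl⟩; exact (hbdd _ (haA k)).1⟩
  have hbdb : BddBelow (range fun k => h (b k)) :=
    ⟨0, by rintro _ ⟨k, rfl⟩; exact (hbdd _ (hbA k)).1⟩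
  have htb' : Tendsto (fun k => h (b k)) atTop (𝓝 (⨅ k, h (b k))) :=
    tendsto_atTop_ciInf hhbm hbdb
  have heq : (⨅ k, h (a k)) = (⨅ k, h (b k)) := by
    apply le_antisymm
    · refine le_ciInf (fun k => ?_)
      obtain ⟨j, hj⟩ := (hta.eventually (eventually_lt_nhds (hbp k))).exists
      exact le_trans (ciInf_le hbda j) (hm (haA j) (hbA k) hj.le)
    · refine le_ciInf (fun k => ?_)
      obtain ⟨j, hj⟩ := (htb.eventually (eventually_lt_nhds (hap k))).exists
      exact le_trans (ciInf_le hbdb j) (hm (hbA j) (haA k) hj.le)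
  rw [heq]
  exact htb'
end transfer

/-- If every point of an interval has orbit whose time-`m mod n` subsequences all converge
to common limits `L m`, then those limits form a periodic attractor: contradiction. -/
lemma attractor_contra {f : ℝ → ℝ} (hpa : HasNoPeriodicAttractor f)
    {n : ℕ} (hn : 1 ≤ n) {u₁ v₁ : ℝ} (huv : u₁ < v₁)
    (hsub : Ioo u₁ v₁ ⊆ Icc (0:ℝ) 1) (L : ℕ → ℝ) (hL : ∀ m, m < n → L m ∈ Icc (0:ℝ) 1)
    (hconv : ∀ t ∈ Ioo u₁ v₁, ∀ m, m < n →
      Tendsto (fun k => f^[m + n * k] t) atTop (𝓝 (L m))) : False := by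
  set Λ : Set ℝ := L '' (Iio n) with hΛ
  have homega : ∀ t ∈ Ioo u₁ v₁, omegaLim f t = Λ := by
    intro t ht
    apply Set.eq_of_subset_of_subset
    · -- omegaLim ⊆ Λ
      intro z hz
      by_contra hzΛ
      have hne : (Finset.range n).Nonempty := ⟨0, Finset.mem_range.mpr hn⟩
      set δ := ((Finset.range n).inf' hne fun m => |z - L m|) / 2 with hδdef
      have hδpos : 0 < δ := by
        have : ∀ m ∈ Finset.range n, 0 < |z - L m| := by
          intro m hm
          refine abs_pos.mpr (sub_ne_zero.mpr ?_)
          intro hzL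
          exact hzΛ ⟨m, Finset.mem_range.mp hm, hzL.symm⟩
        have := (Finset.lt_inf'_iff hne).mpr this
        rw [hδdef]; linarith [this]
      have hKex : ∀ m : ℕ, ∃ K : ℕ, m < n → ∀ k ≥ K, |f^[m + n * k] t - L m| < δ := by
        intro m
        by_cases hm : m < n
        · obtain ⟨K, hK⟩ := (Metric.tendsto_atTop.mp (hconv t ht m hm)) δ hδpos
          exact ⟨K, fun _ k hk => by rw [← Real.dist_eq]; exact hK k hk⟩
        · exact ⟨0, fun h => absurd h hm⟩
      choose K hK using hKex
      set Kmax := (Finset.range n).sup K with hKmax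
      obtain ⟨n', hn', hclose⟩ := hz δ hδpos (n * (Kmax + 1))
      set m := n' % n with hm
      set k := n' / n with hk
      have hmn : m < n := Nat.mod_lt _ (by omega)
      have hmk : m + n * k = n' := Nat.mod_add_div n' n
      have hkK : K m ≤ k := by
        have h1 : Kmax + 1 ≤ k := by
          rw [hk, Nat.le_div_iff_mul_le (by omega : 0 < n)]
          calc (Kmax + 1) * n = n * (Kmax + 1) := by ring
            _ ≤ n' := hn'
        have h2 : K m ≤ Kmax := Finset.le_sup (Finset.mem_range.mpr hmn)
        omega
      have hLm := hK m hmn k hkK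
      rw [hmk] at hLm
      have hinf_le : (Finset.range n).inf' hne (fun m => |z - L m|) ≤ |z - L m| :=
        Finset.inf'_le _ (Finset.mem_range.mpr hmn)
      have : |z - L m| ≤ |z - f^[n'] t| + |f^[n'] t - L m| := by
        calc |z - L m| = |(z - f^[n'] t) + (f^[n'] t - L m)| := by ring_nf
          _ ≤ _ := abs_add_le _ _
      rw [abs_sub_comm z (f^[n'] t)] at this
      linarith [hδdef]
    · -- Λ ⊆ omegaLim
      rintro _ ⟨m, hm, rfl⟩
      intro ε hε N
      obtain ⟨K, hK⟩ := (Metric.tendsto_atTop.mp (hconv t ht m hm)) ε hε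
      refine ⟨m + n * (max K N), ?_, ?_⟩
      · have : N ≤ n * max K N := le_trans (le_max_right K N) (Nat.le_mul_of_pos_left _ (by omega))
        omega
      · rw [← Real.dist_eq]
        exact hK _ (le_max_left K N)
  apply hpa
  refine ⟨Λ, (Set.finite_Iio n).image L, ?_, ?_⟩
  · rintro _ ⟨m, hm, rfl⟩
    exact hL m hm
  · refine ⟨(u₁ + v₁)/2, ?_⟩
    have hopen : Ioo u₁ v₁ ⊆ interior {x | x ∈ Icc (0:ℝ) 1 ∧ omegaLim f x = Λ} := by
      apply interior_maximal
      · intro t ht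
        exact ⟨hsub ht, homega t ht⟩
      · exact isOpen_Ioo
    exact hopen ⟨by linarith, by linarith⟩


set_option maxHeartbeats 1000000 in
lemma preimage_c_dense_at_nonwandering {f : ℝ → ℝ} {c : ℝ}
    (hf : IsContractingLorenz f c) (hpa : HasNoPeriodicAttractor f)
    {y : ℝ} (hy : y ∈ Icc (0:ℝ) 1) (hnw : IsNonWandering f y)
    {ε : ℝ} (hε : 0 < ε) :
    ∃ w, w ∈ Ioo (y-ε) (y+ε) ∩ Icc (0:ℝ) 1 ∧ ∃ m, f^[m] w = c := by
  by_contra hcon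
  push_neg at hcon
  set S := neverC f c with hS
  have hI₀S : Ioo (y-ε) (y+ε) ∩ Icc (0:ℝ) 1 ⊆ S := fun w hw => ⟨hw.2, hcon w hw⟩
  have hyI₀ : y ∈ Ioo (y-ε) (y+ε) ∩ Icc (0:ℝ) 1 := ⟨⟨by linarith [hy.1], by linarith [hy.2]⟩, hy⟩
  have hyS : y ∈ S := hI₀S hyI₀
  set Istar := connectedComponentIn S y with hIstar
  have hIsub : Istar ⊆ S := connectedComponentIn_subset _ _
  have hIpre : IsPreconnected Istar := isPreconnected_connectedComponentIn
  have hIconv : Convex ℝ Istar := hIpre.ordConnected.convex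
  have hIIcc : Istar ⊆ Icc (0:ℝ) 1 := fun t ht => (hIsub ht).1
  have hI₀Istar : Ioo (y-ε) (y+ε) ∩ Icc (0:ℝ) 1 ⊆ Istar :=
    IsPreconnected.subset_connectedComponentIn
      (((convex_Ioo _ _).inter (convex_Icc _ _)).isPreconnected) hyI₀ hI₀S
  obtain ⟨n, hn1, vpt, hv1, hv2⟩ := hnw (Ioo (y-ε) (y+ε)) isOpen_Ioo hyI₀.1
  obtain ⟨w, hwmem, hww⟩ := hv1
  set g := f^[n] with hg
  have hwS : w ∈ S := hI₀S hwmem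
  have hgwS : g w ∈ S := mapsTo_iter_neverC hf n hwS
  have hgwI₀ : g w ∈ Ioo (y-ε) (y+ε) ∩ Icc (0:ℝ) 1 := ⟨hww ▸ hv2, hgwS.1⟩
  have hcontgS : ContinuousOn g S := continuousOn_iter_neverC hf n
  have hgsubS : g '' Istar ⊆ S := by
    rintro _ ⟨s, hs, rfl⟩
    exact mapsTo_iter_neverC hf n (hIsub hs)
  have hgInv : g '' Istar ⊆ Istar := by
    have hgpre : IsPreconnected (g '' Istar) := hIpre.image _ (hcontgS.mono hIsub)
    have hunion : IsPreconnected (Istar ∪ g '' Istar) :=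
      hIpre.union (g w) (hI₀Istar hgwI₀) ⟨w, hI₀Istar hwmem, rfl⟩ hgpre
    have hsubst : Istar ∪ g '' Istar ⊆ Istar :=
      hunion.subset_connectedComponentIn (Or.inl (mem_connectedComponentIn hyS))
        (union_subset hIsub hgsubS)
    exact subset_union_right.trans hsubst
  have hmonog : StrictMonoOn g Istar := (iter_strictMono hf Istar hIsub hIconv n).1
  have hcontgI : ContinuousOn g Istar := hcontgS.mono hIsub
  have hmapsg : MapsTo g Istar Istar := fun t ht => hgInv ⟨t, ht, rfl⟩
  obtain ⟨a₀, b₀, hab, habsub⟩ : ∃ a₀ b₀ : ℝ, a₀ < b₀ ∧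
      Ioo a₀ b₀ ⊆ Ioo (y-ε) (y+ε) ∩ Icc (0:ℝ) 1 := by
    rcases lt_or_eq_of_le hy.2 with hy1 | hy1
    · refine ⟨y, min (y+ε) 1, lt_min (by linarith) hy1, fun t ht => ?_⟩
      have h1 := ht.1; have h2 := ht.2
      have h3 : t < y + ε := lt_of_lt_of_le h2 (min_le_left _ _)
      have h4 : t < 1 := lt_of_lt_of_le h2 (min_le_right _ _)
      exact ⟨⟨by linarith, h3⟩, ⟨by linarith [hy.1], h4.le⟩⟩
    · refine ⟨max (y-ε) 0, y, max_lt (by linarith) (by linarith [hy.1, hy1]), fun t ht => ?_⟩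
      have h1 := lt_of_le_of_lt (le_max_left _ _) ht.1
      have h0 := lt_of_le_of_lt (le_max_right _ _) ht.1
      exact ⟨⟨h1, by linarith [ht.2]⟩, ⟨h0.le, by linarith [ht.2]⟩⟩
  by_cases hfix : ∃ u v' : ℝ, a₀ ≤ u ∧ u < v' ∧ v' ≤ b₀ ∧ ∀ s ∈ Ioo u v', g s ≠ s
  · -- there is a fixed-point-free subinterval: build a periodic attractor
    obtain ⟨u, v', hau, huv, hvb, hfree⟩ := hfix
    have hsubuv : Ioo u v' ⊆ Istar := fun t ht =>
      hI₀Istar (habsub ⟨lt_of_le_of_lt hau ht.1, lt_of_lt_of_le ht.2 hvb⟩)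
    have ht₀ : (u+v')/2 ∈ Ioo u v' := ⟨by linarith, by linarith⟩
    have hsign : (∀ s ∈ Ioo u v', s < g s) ∨ (∀ s ∈ Ioo u v', g s < s) := by
      rcases lt_or_gt_of_ne (hfree _ ht₀) with h | h
      · right
        intro s hs
        have hres := sign_const (φ := fun r => r - g r)
          (continuousOn_id.sub (hcontgI.mono hsubuv))
          (fun s hs => sub_ne_zero.mpr (Ne.symm (hfree s hs))) ht₀ hs (by simpa using h)
        simpa using hres
      · left
        intro s hs
        have hres := sign_const (φ := fun r => g r - r)
          ((hcontgI.mono hsubuv).sub continuousOn_id)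
          (fun s hs => sub_ne_zero.mpr (hfree s hs)) ht₀ hs (by simpa using h)
        simpa using hres
    have hmOn : ∀ m, MonotoneOn f^[m] Istar :=
      fun m => ((iter_strictMono hf Istar hIsub hIconv m).1).monotoneOn
    have hbddm : ∀ m, ∀ s ∈ Istar, f^[m] s ∈ Icc (0:ℝ) 1 :=
      fun m s hs => neverC_subset_Icc (mapsTo_iter_neverC hf m (hIsub hs))
    rcases hsign with hpos | hneg
    · obtain ⟨u₁, v₁, p, h1, h2, h3, horbit⟩ :=
        orbit_converge_inc hIIcc hIconv hmapsg hcontgI hmonog huv hsubuv hfree hpos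
      have ht₁ : (u₁+v₁)/2 ∈ Ioo u₁ v₁ := ⟨by linarith, by linarith⟩
      set t₁ := (u₁+v₁)/2 with ht₁def
      obtain ⟨hoA₁, hoinc₁, hop₁, hot₁⟩ := horbit t₁ ht₁
      have hamono₁ : Monotone (fun k => g^[k] t₁) :=
        monotone_nat_of_le_succ fun k => (hoinc₁ k).le
      set L : ℕ → ℝ := fun m => ⨆ k, f^[m] (g^[k] t₁) with hL
      have hsubIcc : Ioo u₁ v₁ ⊆ Icc (0:ℝ) 1 := fun t ht =>
        hIIcc (hsubuv ⟨lt_trans h1 ht.1, lt_trans ht.2 h3⟩)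
      have hconv_all : ∀ t ∈ Ioo u₁ v₁, ∀ m, m < n →
          Tendsto (fun k => f^[m + n*k] t) atTop (𝓝 (L m)) := by
        intro t ht m _
        obtain ⟨hoA, hoinc, hop, hot⟩ := horbit t ht
        have hbmono : Monotone (fun k => g^[k] t) :=
          monotone_nat_of_le_succ fun k => (hoinc k).le
        have h := tendsto_transfer_inc (hmOn m) (hbddm m)
          hoA₁ hoA hamono₁ hbmono hop₁ hop hot₁ hot
        have heqf : (fun k => f^[m + n*k] t) = (fun k => f^[m] (g^[k] t)) := by
          funext k
          rw [Function.iterate_add_apply f m (n*k) t, Function.iterate_mul]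
        rw [heqf]
        exact h
      have hLmem : ∀ m, m < n → L m ∈ Icc (0:ℝ) 1 := by
        intro m _
        have hb : BddAbove (range fun k => f^[m] (g^[k] t₁)) :=
          ⟨1, by rintro _ ⟨k, rfl⟩; exact (hbddm m _ (hoA₁ k)).2⟩
        constructor
        · exact le_trans (hbddm m _ (hoA₁ 0)).1 (le_ciSup hb 0)
        · exact ciSup_le fun k => (hbddm m _ (hoA₁ k)).2
      exact attractor_contra hpa hn1 h2 hsubIcc L hLmem hconv_all
    · obtain ⟨u₁, v₁, p, h1, h2, h3, horbit⟩ :=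
        orbit_converge_dec hIIcc hIconv hmapsg hcontgI hmonog huv hsubuv hfree hneg
      have ht₁ : (u₁+v₁)/2 ∈ Ioo u₁ v₁ := ⟨by linarith, by linarith⟩
      set t₁ := (u₁+v₁)/2 with ht₁def
      obtain ⟨hoA₁, hoinc₁, hop₁, hot₁⟩ := horbit t₁ ht₁
      have hamono₁ : Antitone (fun k => g^[k] t₁) :=
        antitone_nat_of_succ_le fun k => (hoinc₁ k).le
      set L : ℕ → ℝ := fun m => ⨅ k, f^[m] (g^[k] t₁) with hL
      have hsubIcc : Ioo u₁ v₁ ⊆ Icc (0:ℝ) 1 := fun t ht =>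
        hIIcc (hsubuv ⟨lt_trans h1 ht.1, lt_trans ht.2 h3⟩)
      have hconv_all : ∀ t ∈ Ioo u₁ v₁, ∀ m, m < n →
          Tendsto (fun k => f^[m + n*k] t) atTop (𝓝 (L m)) := by
        intro t ht m _
        obtain ⟨hoA, hoinc, hop, hot⟩ := horbit t ht
        have hbmono : Antitone (fun k => g^[k] t) :=
          antitone_nat_of_succ_le fun k => (hoinc k).le
        have h := tendsto_transfer_dec (hmOn m) (hbddm m)
          hoA₁ hoA hamono₁ hbmono hop₁ hop hot₁ hot
        have heqf : (fun k => f^[m + n*k] t) = (fun k => f^[m] (g^[k] t)) := by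
          funext k
          rw [Function.iterate_add_apply f m (n*k) t, Function.iterate_mul]
        rw [heqf]
        exact h
      have hLmem : ∀ m, m < n → L m ∈ Icc (0:ℝ) 1 := by
        intro m _
        have hb : BddBelow (range fun k => f^[m] (g^[k] t₁)) :=
          ⟨0, by rintro _ ⟨k, rfl⟩; exact (hbddm m _ (hoA₁ k)).1⟩
        constructor
        · exact le_ciInf fun k => (hbddm m _ (hoA₁ k)).1
        · exact le_trans (ciInf_le hb 0) (hbddm m _ (hoA₁ 0)).2
      exact attractor_contra hpa hn1 h2 hsubIcc L hLmem hconv_all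
  · -- fixed points are dense: g is the identity on an interval
    push_neg at hfix
    apply hf.no_trivial_dynamics
    refine ⟨a₀, b₀, n, hab, hn1, ?_⟩
    intro s hs
    by_contra hgs
    have hsI : s ∈ Istar := hI₀Istar (habsub hs)
    have hδ : 0 < |g s - s| := abs_pos.mpr (sub_ne_zero.mpr hgs)
    set δ := |g s - s| with hδdef
    obtain ⟨θ, hθpos, hθ⟩ := Metric.continuousWithinAt_iff.mp (hcontgI s hsI) (δ/4)
      (by linarith)
    set θ' := min θ (δ/4) with hθ'def
    have hθ'pos : 0 < θ' := lt_min hθpos (by linarith)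
    obtain ⟨q, hq, hgq⟩ := hfix (max a₀ (s - θ')) (min b₀ (s + θ'))
      (le_max_left _ _)
      (lt_trans (max_lt hs.1 (by linarith)) (lt_min hs.2 (by linarith)))
      (min_le_left _ _)
    have hq1 : a₀ < q := lt_of_le_of_lt (le_max_left _ _) hq.1
    have hq2 : q < b₀ := lt_of_lt_of_le hq.2 (min_le_left _ _)
    have hq3 : s - θ' < q := lt_of_le_of_lt (le_max_right _ _) hq.1
    have hq4 : q < s + θ' := lt_of_lt_of_le hq.2 (min_le_right _ _)
    have hqI : q ∈ Istar := hI₀Istar (habsub ⟨hq1, hq2⟩)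
    have habs : |q - s| < θ' := abs_lt.mpr ⟨by linarith, by linarith⟩
    have hθ'θ : θ' ≤ θ := min_le_left _ _
    have hθ'δ : θ' ≤ δ/4 := min_le_right _ _
    have hdist : dist q s < θ := by
      rw [Real.dist_eq]
      exact lt_of_lt_of_le habs hθ'θ
    have hgdist := hθ hqI hdist
    rw [hgq, Real.dist_eq] at hgdist
    have hqs : |q - s| < δ/4 := lt_of_lt_of_le habs hθ'δ
    have heq : g s - s = (g s - q) + (q - s) := by ring
    have hfin : |g s - s| < δ/2 := by
      rw [heq]
      refine lt_of_le_of_lt (abs_add_le _ _) ?_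
      rw [abs_sub_comm (g s) q]
      have := add_lt_add hgdist hqs
      linarith
    rw [← hδdef] at hfin
    linarith


set_option maxHeartbeats 1000000 in
/-- If the orbit of `w` hits `c` (with minimal time `m`), and `c ∈ α_f(x)`,
then `w ∈ α_f(x)`. -/
lemma mem_alphaLim_of_hits_c {f : ℝ → ℝ} {c x : ℝ}
    (hf : IsContractingLorenz f c) (hc : c ∈ alphaLim f x)
    {w : ℝ} (hw : w ∈ Icc (0:ℝ) 1) {m : ℕ} (hm : f^[m] w = c)
    (hmin : ∀ k, k < m → f^[k] w ≠ c) :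
    w ∈ alphaLim f x := by
  rcases Nat.eq_zero_or_pos m with hm0 | hmpos
  · subst hm0
    simp only [Function.iterate_zero_apply] at hm
    exact hm ▸ hc
  have hc01 := hf.c_mem
  have hIcc : ∀ k, k ≤ m → f^[k] w ∈ Icc (0:ℝ) 1 := by
    intro k hk
    induction k with
    | zero => simpa using hw
    | succ k ih =>
      rw [Function.iterate_succ_apply']
      exact hf.maps ⟨ih (by omega), hmin k (by omega)⟩
  have hiter : ∀ k, k < m → f^[k] w ∈ Ioo (0:ℝ) 1 ∧ f^[k] w ≠ c := by
    intro k hk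
    have h01 := hIcc k hk.le
    have hne0 : f^[k] w ≠ 0 := by
      intro h0
      have hzero : f^[m] w = 0 := by
        have hsplit : m = (m - k) + k := by omega
        rw [hsplit, Function.iterate_add_apply, h0, Function.iterate_fixed hf.map0]
      rw [hm] at hzero
      exact absurd hzero.symm (ne_of_lt hc01.1)
    have hne1 : f^[k] w ≠ 1 := by
      intro h1
      have hone : f^[m] w = 1 := by
        have hsplit : m = (m - k) + k := by omega
        rw [hsplit, Function.iterate_add_apply, h1, Function.iterate_fixed hf.map1]
      rw [hm] at hone
      exact absurd hone (ne_of_lt hc01.2)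
    exact ⟨⟨lt_of_le_of_ne h01.1 (Ne.symm hne0), lt_of_le_of_ne h01.2 hne1⟩, hmin k hk⟩
  intro ε' hε' N
  have hw01 : w ∈ Ioo (0:ℝ) 1 := by
    have := hiter 0 hmpos
    simpa using this.1
  have hwc : w ≠ c := by
    have := hiter 0 hmpos
    simpa using this.2
  have hQ : ∀ j, j ≤ m → ∃ l r : ℝ, l < w ∧ w < r ∧
      Icc l r ⊆ Ioo (0:ℝ) 1 ∧ Icc l r ⊆ Ioo (w - ε') (w + ε') ∧
      ContinuousOn f^[j] (Icc l r) ∧ StrictMonoOn f^[j] (Icc l r) ∧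
      (j < m → ∀ s ∈ Icc l r, f^[j] s ∈ Ioo (0:ℝ) 1 ∧ f^[j] s ≠ c) := by
    intro j hj
    induction j with
    | zero =>
      have hwcpos : 0 < |w - c| := abs_pos.mpr (sub_ne_zero.mpr hwc)
      set ρ := min (min w (1 - w)) (min ε' (|w - c|)) / 2 with hρ
      have hb1 : min (min w (1-w)) (min ε' |w - c|) ≤ w :=
        le_trans (min_le_left _ _) (min_le_left _ _)
      have hb2 : min (min w (1-w)) (min ε' |w - c|) ≤ 1 - w :=
        le_trans (min_le_left _ _) (min_le_right _ _)
      have hb3 : min (min w (1-w)) (min ε' |w - c|) ≤ ε' :=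
        le_trans (min_le_right _ _) (min_le_left _ _)
      have hb4 : min (min w (1-w)) (min ε' |w - c|) ≤ |w - c| :=
        le_trans (min_le_right _ _) (min_le_right _ _)
      have hρpos : 0 < ρ := by
        rw [hρ]
        have h1 : 0 < min w (1-w) := lt_min hw01.1 (by linarith [hw01.2])
        have h2 : 0 < min ε' (|w - c|) := lt_min hε' hwcpos
        have h3 := lt_min h1 h2
        linarith
      have hρw : ρ < w := by rw [hρ]; linarith
      have hρ1 : ρ < 1 - w := by rw [hρ]; linarith
      have hρε : ρ < ε' := by rw [hρ]; linarith
      have hρc : ρ < |w - c| := by rw [hρ]; linarith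
      refine ⟨w - ρ, w + ρ, by linarith, by linarith, ?_, ?_, ?_, ?_, ?_⟩
      · intro s hs
        exact ⟨by linarith [hs.1], by linarith [hs.2]⟩
      · intro s hs
        exact ⟨by linarith [hs.1], by linarith [hs.2]⟩
      · simpa using continuousOn_id
      · simpa using strictMonoOn_id
      · intro _ s hs
        simp only [Function.iterate_zero_apply]
        refine ⟨⟨by linarith [hs.1], by linarith [hs.2]⟩, ?_⟩
        intro hsc
        have h1 : |s - w| ≤ ρ := abs_le.mpr ⟨by linarith [hs.1], by linarith [hs.2]⟩
        rw [hsc, abs_sub_comm] at h1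
        linarith
    | succ j ih =>
      obtain ⟨l, r, hlw, hwr, h01sub, hεsub, hcont, hmono, himg⟩ := ih (by omega)
      have hjm : j < m := by omega
      have himg' := himg hjm
      have hKsub : f^[j] '' Icc l r ⊆ lorDom c := by
        rintro _ ⟨s, hs, rfl⟩
        obtain ⟨h1, h2⟩ := himg' s hs
        exact ⟨⟨h1.1.le, h1.2.le⟩, h2⟩
      have hKconv : Convex ℝ (f^[j] '' Icc l r) :=
        (((convex_Icc l r).isPreconnected).image _ hcont).ordConnected.convex
      have hKmono : StrictMonoOn f (f^[j] '' Icc l r) :=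
        strictMonoOn_of_subset hf _ hKsub hKconv
      have hiterj : f^[j+1] = f ∘ f^[j] := Function.iterate_succ' f j
      have hcont' : ContinuousOn f^[j+1] (Icc l r) := by
        rw [hiterj]
        exact (continuousOn_lorDom hf).comp hcont (fun s hs => hKsub ⟨s, hs, rfl⟩)
      have hmono' : StrictMonoOn f^[j+1] (Icc l r) := by
        rw [hiterj]
        exact hKmono.comp hmono (mapsTo_image _ _)
      by_cases hjm1 : j + 1 < m
      · obtain ⟨ht01, htc⟩ := hiter (j+1) hjm1
        set t := f^[j+1] w with ht
        have htcpos : 0 < |t - c| := abs_pos.mpr (sub_ne_zero.mpr htc)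
        set ρ := min (min t (1 - t)) (|t - c|) / 2 with hρ
        have hb1 : min (min t (1-t)) (|t - c|) ≤ t :=
          le_trans (min_le_left _ _) (min_le_left _ _)
        have hb2 : min (min t (1-t)) (|t - c|) ≤ 1 - t :=
          le_trans (min_le_left _ _) (min_le_right _ _)
        have hb3 : min (min t (1-t)) (|t - c|) ≤ |t - c| := min_le_right _ _
        have hρpos : 0 < ρ := by
          rw [hρ]
          have h1 : 0 < min t (1-t) := lt_min ht01.1 (by linarith [ht01.2])
          have h3 := lt_min h1 htcpos
          linarith
        have hCA : ContinuousAt f^[j+1] w := hcont'.continuousAt (Icc_mem_nhds hlw hwr)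
        obtain ⟨θ, hθpos, hθ⟩ := Metric.continuousAt_iff.mp hCA ρ hρpos
        refine ⟨max l (w - θ/2), min r (w + θ/2),
          max_lt hlw (by linarith), lt_min hwr (by linarith), ?_, ?_, ?_, ?_, ?_⟩
        · exact (Icc_subset_Icc (le_max_left _ _) (min_le_left _ _)).trans h01sub
        · exact (Icc_subset_Icc (le_max_left _ _) (min_le_left _ _)).trans hεsub
        · exact hcont'.mono (Icc_subset_Icc (le_max_left _ _) (min_le_left _ _))
        · exact hmono'.mono (Icc_subset_Icc (le_max_left _ _) (min_le_left _ _))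
        · intro _ s hs
          have hs1 : w - θ/2 ≤ s := le_trans (le_max_right _ _) hs.1
          have hs2 : s ≤ w + θ/2 := le_trans hs.2 (min_le_right _ _)
          have habs2 : |s - w| ≤ θ/2 := abs_le.mpr ⟨by linarith, by linarith⟩
          have hdist : dist s w < θ := by
            rw [Real.dist_eq]
            exact lt_of_le_of_lt habs2 (by linarith)
          have := hθ hdist
          rw [Real.dist_eq, ← ht] at this
          have habs := abs_lt.mp this
          refine ⟨⟨by rw [hρ] at habs; linarith [habs.1],
            by rw [hρ] at habs; linarith [habs.2]⟩, ?_⟩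
          intro hsc
          rw [hsc] at this
          rw [abs_sub_comm] at this
          rw [hρ] at this
          linarith
      · have hjm1' : j + 1 = m := by omega
        exact ⟨l, r, hlw, hwr, h01sub, hεsub, hcont', hmono', fun h => absurd h hjm1⟩
  obtain ⟨l, r, hlw, hwr, h01sub, hεsub, hcontm, hmonom, _⟩ := hQ m le_rfl
  have hlmem : l ∈ Icc l r := ⟨le_rfl, by linarith⟩
  have hrmem : r ∈ Icc l r := ⟨by linarith, le_rfl⟩
  have hwmem : w ∈ Icc l r := ⟨hlw.le, hwr.le⟩
  have hfl : f^[m] l < c := by rw [← hm]; exact hmonom hlmem hwmem hlw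
  have hfr : c < f^[m] r := by rw [← hm]; exact hmonom hwmem hrmem hwr
  set η := min (c - f^[m] l) (f^[m] r - c) with hη
  have hηpos : 0 < η := lt_min (by linarith) (by linarith)
  obtain ⟨n, hn, z, hz, hzc⟩ := hc η hηpos N
  have hzmem : z ∈ Icc (f^[m] l) (f^[m] r) := by
    have h1 := abs_lt.mp hzc
    constructor
    · have := min_le_left (c - f^[m] l) (f^[m] r - c)
      rw [hη] at h1
      linarith [h1.1]
    · have := min_le_right (c - f^[m] l) (f^[m] r - c)
      rw [hη] at h1
      linarith [h1.2]
  obtain ⟨w', hw'mem, hw'⟩ := intermediate_value_Icc (by linarith : l ≤ r) hcontm hzmem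
  refine ⟨n + m, by omega, w', ?_, ?_⟩
  · rw [Function.iterate_add_apply, hw', hz]
  · have hin := hεsub hw'mem
    exact abs_lt.mpr ⟨by linarith [hin.1], by linarith [hin.2]⟩

end AuxProofs

/-- If `c ∈ α_f(x)` then the α-limit of `x` contains the whole non-wandering set. -/
theorem alpha_limit_contains_nonwandering
    (f : ℝ → ℝ) (c : ℝ)
    (hf : IsContractingLorenz f c) (hnf : IsNonFlat f c)
    (hpa : HasNoPeriodicAttractor f)
    (x : ℝ) (hx : x ∈ Icc (0:ℝ) 1) (hc : c ∈ alphaLim f x) :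
    {y | y ∈ Icc (0:ℝ) 1 ∧ IsNonWandering f y} ⊆ alphaLim f x := by
  rintro y ⟨hyIcc, hynw⟩
  intro ε hε N
  obtain ⟨w, hwmem, hwhits⟩ :=
    preimage_c_dense_at_nonwandering hf hpa hyIcc hynw (ε := ε/2) (by linarith)
  have hex : ∃ m, f^[m] w = c := hwhits
  have hm := Nat.find_spec hex
  have hmin : ∀ k, k < Nat.find hex → f^[k] w ≠ c := fun k hk => Nat.find_min hex hk
  have hwα := mem_alphaLim_of_hits_c hf hc hwmem.2 hm hmin
  obtain ⟨n, hn, z, hz, hzw⟩ := hwα (ε/2) (by linarith) N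
  refine ⟨n, hn, z, hz, ?_⟩
  have h1 : |w - y| < ε/2 :=
    abs_lt.mpr ⟨by linarith [hwmem.1.1], by linarith [hwmem.1.2]⟩
  have h2 := abs_lt.mp hzw
  have h3 := abs_lt.mp h1
  exact abs_lt.mpr ⟨by linarith, by linarith⟩
end

section
/- Let X be a compact metric space, U⊂X an open and dense subset, and f:U→X a continuous map. Then either there is no point x∈⋂_{n≥0}f^{−n}(U) with ω_f(x)=X, or the set {x∈X: ω_f(x)=X} is residual in X. -/
open Set Filter Topology

/-- The ω-limit set of a point of a metric space under (iteration of) a map. -/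
def omegaLimSet {X : Type*} [MetricSpace X] (f : X → X) (x : X) : Set X :=
  {y | ∀ ε > 0, ∀ N : ℕ, ∃ n ≥ N, dist (f^[n] x) y < ε}

/-- Either no point (with well-defined forward orbit) has dense orbit, or the set of
points with ω-limit equal to the whole space is residual. -/
theorem dense_orbit_dichotomy
    {X : Type*} [MetricSpace X] [CompactSpace X]
    (U : Set X) (hUopen : IsOpen U) (hUdense : Dense U)
    (f : X → X) (hf : ContinuousOn f U) :
    (¬ ∃ x : X, (∀ n : ℕ, f^[n] x ∈ U) ∧ omegaLimSet f x = Set.univ) ∨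
    {x : X | (∀ n : ℕ, f^[n] x ∈ U) ∧ omegaLimSet f x = Set.univ} ∈ residual X := by
  by_cases h : ∃ x : X, (∀ n : ℕ, f^[n] x ∈ U) ∧ omegaLimSet f x = Set.univ
  · right
    obtain ⟨x₀, hx₀U, hx₀ω⟩ := h
    obtain ⟨D, hDc, hDd⟩ := TopologicalSpace.exists_countable_dense X
    set S : Set X := {x : X | (∀ n : ℕ, f^[n] x ∈ U) ∧ omegaLimSet f x = Set.univ}
      with hSdef
    set W : ℕ → Set X := fun n => {x | ∀ k ≤ n, f^[k] x ∈ U} with hWdef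
    -- key openness/continuity facts
    have hWkey : ∀ n, IsOpen (W n) ∧ ContinuousOn (f^[n]) (W n) := by
      intro n
      induction n with
      | zero =>
        have hW0 : W 0 = U := by
          ext x
          simp [hWdef, Nat.le_zero]
        constructor
        · rw [hW0]; exact hUopen
        · simpa using continuousOn_id
      | succ n ih =>
        have hmaps : Set.MapsTo (f^[n]) (W n) U := fun x hx => hx n le_rfl
        have hcont : ContinuousOn (f^[n+1]) (W n) := by
          rw [Function.iterate_succ']
          exact hf.comp ih.2 hmaps
        have hWsucc : W (n+1) = W n ∩ (f^[n+1]) ⁻¹' U := by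
          ext x
          constructor
          · intro hx
            exact ⟨fun k hk => hx k (hk.trans (Nat.le_succ n)), hx (n+1) le_rfl⟩
          · rintro ⟨h1, h2⟩ k hk
            rcases Nat.lt_succ_iff_lt_or_eq.1 (Nat.lt_succ_of_le hk) with h' | h'
            · exact h1 k (Nat.lt_succ_iff.1 h')
            · rw [h']; exact h2
        refine ⟨?_, ?_⟩
        · rw [hWsucc]
          exact hcont.isOpen_inter_preimage ih.1 hUopen
        · refine hcont.mono ?_
          rw [hWsucc]; exact Set.inter_subset_left
    set A : X → ℕ → ℕ → Set X := fun y m N =>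
      ⋃ n, (W (n + N) ∩ (f^[n + N]) ⁻¹' Metric.ball y (1 / (m + 1))) with hAdef
    have hAopen : ∀ y m N, IsOpen (A y m N) := by
      intro y m N
      refine isOpen_iUnion fun n => ?_
      exact (hWkey (n + N)).2.isOpen_inter_preimage (hWkey (n + N)).1 Metric.isOpen_ball
    -- every orbit point of x₀ is in S
    have horbS : ∀ k, f^[k] x₀ ∈ S := by
      intro k
      constructor
      · intro n
        rw [← Function.iterate_add_apply]
        exact hx₀U (n + k)
      · apply Set.eq_univ_of_forall
        intro y
        intro ε hε N
        have hy : y ∈ omegaLimSet f x₀ := by rw [hx₀ω]; trivial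
        obtain ⟨n, hn, hd⟩ := hy ε hε (N + k)
        refine ⟨n - k, ?_, ?_⟩
        · omega
        · rw [← Function.iterate_add_apply]
          have : n - k + k = n := by omega
          rw [this]
          exact hd
    have hSdense : Dense S := by
      intro z
      rw [Metric.mem_closure_iff]
      intro ε hε
      have hz : z ∈ omegaLimSet f x₀ := by rw [hx₀ω]; trivial
      obtain ⟨n, _, hd⟩ := hz ε hε 0
      exact ⟨f^[n] x₀, horbS n, by rw [dist_comm]; exact hd⟩
    have hSsubW : ∀ n, S ⊆ W n := by
      intro n x hx k _
      exact hx.1 k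
    have hSsubA : ∀ (y : X) (m N : ℕ), S ⊆ A y m N := by
      intro y m N x hx
      have hy : y ∈ omegaLimSet f x := by rw [hx.2]; trivial
      have hεpos : (0 : ℝ) < 1 / (m + 1) := by positivity
      obtain ⟨n, hn, hd⟩ := hy (1 / (m + 1)) hεpos N
      refine Set.mem_iUnion.2 ⟨n - N, ?_⟩
      have hnN : n - N + N = n := by omega
      rw [hnN]
      exact ⟨hSsubW n hx, by simpa [Metric.mem_ball] using hd⟩
    -- S equals a countable intersection of the open sets
    have hEq : S = (⋂ n, W n) ∩ ⋂ y ∈ D, ⋂ m, ⋂ N, A y m N := by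
      apply Set.Subset.antisymm
      · intro x hx
        refine ⟨Set.mem_iInter.2 fun n => hSsubW n hx, ?_⟩
        exact Set.mem_iInter₂.2 fun y _ => Set.mem_iInter.2 fun m =>
          Set.mem_iInter.2 fun N => hSsubA y m N hx
      · rintro x ⟨hxW, hxA⟩
        rw [Set.mem_iInter] at hxW
        constructor
        · intro n
          exact hxW n n le_rfl
        · apply Set.eq_univ_of_forall
          intro z ε hε N
          obtain ⟨y, hyD, hyz⟩ := Metric.mem_closure_iff.1 (hDd z) (ε / 2) (by linarith)
          obtain ⟨m, hm⟩ := exists_nat_one_div_lt (show (0:ℝ) < ε / 2 by linarith)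
          have hxAy := Set.mem_iInter₂.1 hxA y hyD
          rw [Set.mem_iInter] at hxAy
          have := Set.mem_iInter.1 (hxAy m) N
          obtain ⟨n, hn⟩ := Set.mem_iUnion.1 this
          refine ⟨n + N, Nat.le_add_left N n, ?_⟩
          have hball : dist (f^[n + N] x) y < 1 / (m + 1) := by
            have := hn.2
            simpa [Metric.mem_ball] using this
          calc dist (f^[n + N] x) z ≤ dist (f^[n + N] x) y + dist y z := dist_triangle _ _ _
            _ < 1 / (m + 1) + ε / 2 := by
                have : dist y z < ε / 2 := by rw [dist_comm]; exact hyz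
                linarith
            _ < ε / 2 + ε / 2 := by push_cast at hm ⊢; linarith
            _ = ε := by ring
    rw [hEq]
    apply Filter.inter_mem
    · exact (countable_iInter_mem).2 fun n =>
        residual_of_dense_open (hWkey n).1 ((hSdense.mono (hSsubW n)))
    · refine (countable_bInter_mem hDc).2 fun y hy => ?_
      refine (countable_iInter_mem).2 fun m => ?_
      refine (countable_iInter_mem).2 fun N => ?_
      exact residual_of_dense_open (hAopen y m N) (hSdense.mono (hSsubA y m N))
  · exact Or.inl h
end
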